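/- arXiv:2205.14811 — 8 statements merged into one kernel-verified Lean document; each statement's English description precedes it below -/
import Mathlib

section
/- Let (a_n), (b_n), (ã_n) be sequences of nonnegative real numbers with ã_n > 0, and let C > 0, p > 0 and ε ∈ [0, p] be constants. Assume: (i) ∑_{n=1}^∞ a_n = ∞; (ii) ∑_{n=1}^∞ a_n b_n^p < ∞; (iii) lim_{n→∞} a_n/ã_n = 1; and (iv) |b_{n+1} − b_n| ≤ C ã_n b_n^{p−ε} for all n. Then lim_{n→∞} b_n = 0. -/
open Filter Topology

lemma abs_sub_le_sum_abs_diff (f : ℕ → ℝ) (i m : ℕ) (h : i ≤ m) :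
    |f m - f i| ≤ ∑ k ∈ Finset.Ico i m, |f (k + 1) - f k| := by
  have : f m - f i = ∑ k ∈ Finset.Ico i m, (f (k + 1) - f k) := by
    rw [Finset.sum_Ico_eq_sub _ h, Finset.sum_range_sub, Finset.sum_range_sub]; ring
  rw [this]
  exact Finset.abs_sum_le_sum_abs _ _

/-- Lemma 3.1: if `∑ aₙ = ∞`, `∑ aₙ bₙ^p < ∞`, `aₙ/ãₙ → 1` and
`|b_{n+1} − bₙ| ≤ C ãₙ bₙ^{p−ε}`, then `bₙ → 0`. -/
theorem lemma_3_1 (a b atil : ℕ → ℝ) (C p ε : ℝ)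
    (ha : ∀ n, 0 ≤ a n) (hb : ∀ n, 0 ≤ b n) (hatil : ∀ n, 0 < atil n)
    (hC : 0 < C) (hp : 0 < p) (hε : ε ∈ Set.Icc (0 : ℝ) p)
    (hdiv : ¬ Summable a)
    (hconv : Summable (fun n => a n * b n ^ p))
    (hratio : Tendsto (fun n => a n / atil n) atTop (𝓝 1))
    (hdiff : ∀ n, |b (n + 1) - b n| ≤ C * atil n * b n ^ (p - ε)) :
    Tendsto b atTop (𝓝 0) := by
  obtain ⟨hε0, hεp⟩ := hε
  -- b is frequently below any positive threshold
  have hfreq : ∀ d : ℝ, 0 < d → ∀ N : ℕ, ∃ n, N ≤ n ∧ b n < d := by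
    intro d hd N
    by_contra h
    push_neg at h
    apply hdiv
    rw [← summable_nat_add_iff N]
    have hs : Summable (fun n => a (n + N) * b (n + N) ^ p / d ^ p) :=
      ((summable_nat_add_iff N).2 hconv).div_const _
    refine Summable.of_nonneg_of_le (fun n => ha _) (fun n => ?_) hs
    have hdp : (0 : ℝ) < d ^ p := Real.rpow_pos_of_pos hd p
    rw [le_div_iff₀ hdp]
    exact mul_le_mul_of_nonneg_left
      (Real.rpow_le_rpow hd.le (h _ (Nat.le_add_left N n)) hp.le) (ha _)
  -- eventually atil n ≤ 2 * a n
  have hAt : ∀ᶠ n in atTop, atil n ≤ 2 * a n := by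
    filter_upwards [hratio.eventually (eventually_ge_nhds (by norm_num : (1:ℝ)/2 < 1))]
      with n hn
    rw [le_div_iff₀ (hatil n)] at hn
    linarith
  obtain ⟨N1, hN1⟩ := eventually_atTop.1 hAt
  rw [Metric.tendsto_atTop]
  intro δ hδ
  by_contra hcon
  push_neg at hcon
  have hbig : ∀ N, ∃ n, N ≤ n ∧ δ ≤ b n := by
    intro N
    obtain ⟨n, hn, hd⟩ := hcon N
    exact ⟨n, hn, by rwa [Real.dist_eq, sub_zero, abs_of_nonneg (hb n)] at hd⟩
  set c := δ / 2 with hc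
  have hc0 : 0 < c := by positivity
  have hcε : (0 : ℝ) < c ^ ε := Real.rpow_pos_of_pos hc0 ε
  set η : ℝ := c * c ^ ε / (4 * C) with hη
  have hη0 : 0 < η := by positivity
  obtain ⟨s, hs⟩ := (summable_iff_vanishing.1 hconv) (Set.Iio η) (Iio_mem_nhds hη0)
  set N0 := max N1 (s.sup id + 1) with hN0def
  obtain ⟨i, hiN, hbi⟩ := hbig N0
  obtain ⟨j, hji, hbj⟩ := hfreq c hc0 (i + 1)
  have hex : ∃ k, i < k ∧ b k < c := ⟨j, lt_of_lt_of_le (Nat.lt_succ_self i) hji, hbj⟩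
  set m := Nat.find hex with hm
  obtain ⟨him, hbm⟩ : i < m ∧ b m < c := Nat.find_spec hex
  have hmid : ∀ k, i ≤ k → k < m → c ≤ b k := by
    intro k hik hkm
    rcases eq_or_lt_of_le hik with rfl | hik'
    · rw [hc]; linarith [hbi]
    · by_contra hlt
      exact Nat.find_min hex hkm ⟨hik', lt_of_not_ge hlt⟩
  -- the crossing is at least c
  have hchain : c ≤ ∑ k ∈ Finset.Ico i m, |b (k + 1) - b k| := by
    calc c ≤ b i - b m := by
          have : δ ≤ b i := hbi
          rw [hc] at *; linarith
      _ ≤ |b m - b i| := by rw [abs_sub_comm]; exact le_abs_self _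
      _ ≤ _ := abs_sub_le_sum_abs_diff b i m him.le
  -- per-term bound
  have hterm : ∀ k ∈ Finset.Ico i m,
      |b (k + 1) - b k| ≤ (2 * C / c ^ ε) * (a k * b k ^ p) := by
    intro k hk
    rw [Finset.mem_Ico] at hk
    have hbk : c ≤ b k := hmid k hk.1 hk.2
    have hbk0 : 0 < b k := lt_of_lt_of_le hc0 hbk
    have hkN1 : N1 ≤ k := le_trans (le_trans (le_max_left _ _) hiN) hk.1
    have hat2 : atil k ≤ 2 * a k := hN1 k hkN1
    have hrw : b k ^ (p - ε) = b k ^ p / b k ^ ε := Real.rpow_sub hbk0 p ε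
    have hmono : c ^ ε ≤ b k ^ ε := Real.rpow_le_rpow hc0.le hbk hε0
    have hdivle : b k ^ p / b k ^ ε ≤ b k ^ p / c ^ ε :=
      div_le_div_of_nonneg_left (Real.rpow_nonneg (hb k) p) hcε hmono
    calc |b (k + 1) - b k| ≤ C * atil k * b k ^ (p - ε) := hdiff k
      _ ≤ C * (2 * a k) * b k ^ (p - ε) := by
          apply mul_le_mul_of_nonneg_right _ (Real.rpow_nonneg (hb k) _)
          exact mul_le_mul_of_nonneg_left hat2 hC.le
      _ = C * (2 * a k) * (b k ^ p / b k ^ ε) := by rw [hrw]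
      _ ≤ C * (2 * a k) * (b k ^ p / c ^ ε) := by
          exact mul_le_mul_of_nonneg_left hdivle
            (mul_nonneg hC.le (mul_nonneg (by norm_num) (ha k)))
      _ = (2 * C / c ^ ε) * (a k * b k ^ p) := by ring
  have hdisj : Disjoint (Finset.Ico i m) s := by
    rw [Finset.disjoint_left]
    intro k hk hks
    rw [Finset.mem_Ico] at hk
    have h1 : k ≤ s.sup id := Finset.le_sup (f := id) hks
    have h2 : s.sup id + 1 ≤ N0 := le_max_right _ _
    omega
  have htail : ∑ k ∈ Finset.Ico i m, a k * b k ^ p < η := by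
    have := hs _ hdisj
    simpa using this
  have hsum2 : ∑ k ∈ Finset.Ico i m, |b (k + 1) - b k|
      ≤ (2 * C / c ^ ε) * ∑ k ∈ Finset.Ico i m, a k * b k ^ p := by
    rw [Finset.mul_sum]
    exact Finset.sum_le_sum hterm
  have hK : 0 < 2 * C / c ^ ε := by positivity
  have hfinal : (2 * C / c ^ ε) * ∑ k ∈ Finset.Ico i m, a k * b k ^ p
      < (2 * C / c ^ ε) * η := mul_lt_mul_of_pos_left htail hK
  have heq : (2 * C / c ^ ε) * η = c / 2 := by
    rw [hη]; field_simp; ring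
  have : c < c / 2 := by
    calc c ≤ _ := hchain
      _ ≤ _ := hsum2
      _ < (2 * C / c ^ ε) * η := hfinal
      _ = c / 2 := heq
  linarith
end

section
/- Let (a_n), (b_n), (ã_n) be sequences of nonnegative real numbers with ã_n > 0, and let C > 0 be a constant. Assume: (i) ∑_{n=1}^∞ a_n = ∞; (ii) ∑_{n=1}^∞ a_n b_n² < ∞; (iii) lim_{n→∞} a_n/ã_n = 1; and (iv) |b_{n+1} − b_n| ≤ C ã_n for all n. Then lim_{n→∞} b_n = 0. -/
open Filter Topology Finset

/-- Corollary 3.1: if `∑ aₙ = ∞`, `∑ aₙ bₙ² < ∞`, `aₙ/ãₙ → 1` and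
`|b_{n+1} − bₙ| ≤ C ãₙ`, then `bₙ → 0`. -/
theorem corollary_3_1 (a b atil : ℕ → ℝ) (C : ℝ)
    (ha : ∀ n, 0 ≤ a n) (hb : ∀ n, 0 ≤ b n) (hatil : ∀ n, 0 < atil n)
    (hC : 0 < C)
    (hdiv : ¬ Summable a)
    (hconv : Summable (fun n => a n * b n ^ 2))
    (hratio : Tendsto (fun n => a n / atil n) atTop (𝓝 1))
    (hdiff : ∀ n, |b (n + 1) - b n| ≤ C * atil n) :
    Tendsto b atTop (𝓝 0) := by
  classical
  by_contra hnot
  rw [Metric.tendsto_atTop] at hnot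
  push_neg at hnot
  obtain ⟨ε, hε, hfreq⟩ := hnot
  have hfreq' : ∀ N, ∃ n ≥ N, ε ≤ b n := by
    intro N
    obtain ⟨n, hn, h⟩ := hfreq N
    refine ⟨n, hn, ?_⟩
    rwa [Real.dist_eq, sub_zero, abs_of_nonneg (hb n)] at h
  set f : ℕ → ℝ := fun n => a n * b n ^ 2 with hfdef
  have hf0 : ∀ n, 0 ≤ f n := fun n => mul_nonneg (ha n) (sq_nonneg _)
  -- per-term bound when b j ≥ ε/2
  have hterm : ∀ j, ε / 2 ≤ b j → a j ≤ 4 / ε ^ 2 * f j := by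
    intro j hj
    have h1 : a j * (ε / 2) ^ 2 ≤ f j := by
      have h2 : (ε / 2) ^ 2 ≤ b j ^ 2 :=
        pow_le_pow_left₀ (by positivity) hj 2
      exact mul_le_mul_of_nonneg_left h2 (ha j)
    rw [div_mul_eq_mul_div, le_div_iff₀ (by positivity : (0:ℝ) < ε ^ 2)]
    nlinarith [h1]
  -- infinitely many n with b n < ε/2
  have hsmall : ∀ N, ∃ n ≥ N, b n < ε / 2 := by
    intro N
    by_contra h
    push_neg at h
    apply hdiv
    rw [← summable_nat_add_iff N]
    exact Summable.of_nonneg_of_le (fun n => ha _)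
      (fun n => hterm _ (h _ (Nat.le_add_left N n)))
      (((summable_nat_add_iff N).mpr hconv).mul_left _)
  -- eventually atil n ≤ 2 a n
  have hrat : ∀ᶠ n in atTop, atil n ≤ 2 * a n := by
    filter_upwards [hratio.eventually
      (eventually_gt_nhds (by norm_num : (1:ℝ)/2 < 1))] with n hn
    have h2 : 1 / 2 * atil n < a n := (lt_div_iff₀ (hatil n)).mp hn
    linarith
  obtain ⟨N2, hN2⟩ := eventually_atTop.mp hrat
  -- tails are small
  set S := ∑' n, f n with hSdef
  set δ := ε ^ 3 / (32 * C) with hδdef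
  have hδ : 0 < δ := by positivity
  have htail : ∃ N1, ∀ k, N1 ≤ k → ∀ l, k ≤ l → (∑ j ∈ Ico k l, f j) < δ := by
    have hps := hconv.hasSum.tendsto_sum_nat
    have h1 := hps.eventually (eventually_gt_nhds (show S - δ < S by linarith))
    rw [eventually_atTop] at h1
    obtain ⟨N1, hN1⟩ := h1
    refine ⟨N1, fun k hk l hl => ?_⟩
    rw [Finset.sum_Ico_eq_sub _ hl]
    have h2 : ∑ j ∈ range l, f j ≤ S := Summable.sum_le_tsum _ (fun i _ => hf0 i) hconv
    have h3 := hN1 k hk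
    linarith
  obtain ⟨N1, hN1⟩ := htail
  -- pick a downcrossing
  obtain ⟨k, hk, hbk⟩ := hfreq' (max N1 N2)
  obtain ⟨n0, hn0, hbn0⟩ := hsmall (k + 1)
  have hex : ∃ l, k + 1 ≤ l ∧ b l < ε / 2 := ⟨n0, hn0, hbn0⟩
  set l := Nat.find hex with hldef
  obtain ⟨hl1, hl2⟩ := Nat.find_spec hex
  have hkl : k ≤ l := le_trans (Nat.le_succ k) hl1
  have hmin : ∀ j, k ≤ j → j < l → ε / 2 ≤ b j := by
    intro j hj hjl
    rcases eq_or_lt_of_le hj with rfl | hj'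
    · linarith
    · by_contra hcon
      push_neg at hcon
      exact Nat.find_min hex hjl ⟨hj', hcon⟩
  have htel : b l - b k = ∑ j ∈ Ico k l, (b (j + 1) - b j) := by
    rw [Finset.sum_Ico_eq_sub _ hkl, Finset.sum_range_sub, Finset.sum_range_sub]
    ring
  have hchain : b k - b l ≤ ε / 4 := by
    calc b k - b l ≤ |b l - b k| := by
          rw [abs_sub_comm]; exact le_abs_self _
      _ = |∑ j ∈ Ico k l, (b (j + 1) - b j)| := by rw [htel]
      _ ≤ ∑ j ∈ Ico k l, |b (j + 1) - b j| := Finset.abs_sum_le_sum_abs _ _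
      _ ≤ ∑ j ∈ Ico k l, (8 * C / ε ^ 2) * f j := by
          refine Finset.sum_le_sum (fun j hj => ?_)
          obtain ⟨hj1, hj2⟩ := Finset.mem_Ico.mp hj
          have h2 : atil j ≤ 2 * a j :=
            hN2 j (le_trans (le_trans (le_max_right N1 N2) hk) hj1)
          have h3 : a j ≤ 4 / ε ^ 2 * f j := hterm j (hmin j hj1 hj2)
          calc |b (j + 1) - b j| ≤ C * atil j := hdiff j
            _ ≤ C * (2 * a j) := by nlinarith
            _ ≤ C * (2 * (4 / ε ^ 2 * f j)) := by nlinarith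
            _ = 8 * C / ε ^ 2 * f j := by ring
      _ = (8 * C / ε ^ 2) * ∑ j ∈ Ico k l, f j := by rw [Finset.mul_sum]
      _ ≤ (8 * C / ε ^ 2) * δ := by
          have h4 := hN1 k (le_trans (le_max_left N1 N2) hk) l hkl
          have h5 : (0:ℝ) ≤ 8 * C / ε ^ 2 := by positivity
          nlinarith
      _ = ε / 4 := by
          rw [hδdef]; field_simp; ring
  linarith
end

section
/- Let (Y_t)_{t≥0}, (W_t)_{t≥0}, (Z_t)_{t≥0} be real sequences with W_t ≥ 0 for all t. Assume Y_{t+1} ≤ Y_t − W_t + Z_t for all t = 0, 1, 2, …, and that the partial sums ∑_{t=0}^T Z_t converge to a finite limit as T → ∞. Then either Y_t → −∞, or else Y_t converges to a finite value and ∑_{t=0}^∞ W_t < ∞. -/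
open Filter Topology Finset

/-- Lemma 3.2 (Bertsekas–Tsitsiklis): if `Y_{t+1} ≤ Y_t − W_t + Z_t` with `W_t ≥ 0`
and the partial sums of `∑ Z_t` converge, then either `Y_t → −∞`, or `Y_t` converges
to a finite value and `∑ W_t < ∞`. -/
theorem lemma_3_2 (Y W Z : ℕ → ℝ)
    (hW : ∀ t, 0 ≤ W t)
    (hrec : ∀ t, Y (t + 1) ≤ Y t - W t + Z t)
    (hZ : ∃ S : ℝ, Tendsto (fun T => ∑ t ∈ Finset.range (T + 1), Z t) atTop (𝓝 S)) :
    Tendsto Y atTop atBot ∨ ((∃ L : ℝ, Tendsto Y atTop (𝓝 L)) ∧ Summable W) := by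
  obtain ⟨S, hS⟩ := hZ
  set Q : ℕ → ℝ := fun n => ∑ t ∈ Finset.range n, Z t with hQdef
  set P : ℕ → ℝ := fun n => ∑ t ∈ Finset.range n, W t with hPdef
  have hQ : Tendsto Q atTop (𝓝 S) := (tendsto_add_atTop_iff_nat 1).mp hS
  set U : ℕ → ℝ := fun n => Y n + P n - Q n with hUdef
  have hPsucc : ∀ n, P (n + 1) = P n + W n := fun n => Finset.sum_range_succ W n
  have hQsucc : ∀ n, Q (n + 1) = Q n + Z n := fun n => Finset.sum_range_succ Z n
  have hUanti : Antitone U := by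
    apply antitone_nat_of_succ_le
    intro n
    simp only [hUdef, hPsucc, hQsucc]
    have := hrec n
    linarith
  have hPmono : Monotone P := by
    apply monotone_nat_of_le_succ
    intro n
    simp only [hPsucc]
    linarith [hW n]
  have hPnonneg : ∀ n, 0 ≤ P n := fun n => Finset.sum_nonneg (fun i _ => hW i)
  have hYeq : ∀ n, Y n = U n - P n + Q n := by intro n; simp only [hUdef]; ring
  rcases tendsto_of_antitone hUanti with hUbot | ⟨L, hU⟩
  · -- Y n ≤ U n + Q n → -∞
    left
    have hbound : ∀ n, Y n ≤ U n + Q n := by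
      intro n; rw [hYeq n]; linarith [hPnonneg n]
    exact tendsto_atBot_mono hbound (hUbot.atBot_add hQ)
  · rcases tendsto_of_monotone hPmono with hPtop | ⟨M, hP⟩
    · left
      have hbound : ∀ n, Y n ≤ U 0 + Q n - P n := by
        intro n
        rw [hYeq n]
        have := hUanti (Nat.zero_le n)
        linarith
      have : Tendsto (fun n => U 0 + Q n - P n) atTop atBot := by
        have h1 : Tendsto (fun n => U 0 + Q n) atTop (𝓝 (U 0 + S)) :=
          tendsto_const_nhds.add hQ
        exact h1.add_atBot (tendsto_neg_atBot_iff.mpr hPtop)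
      exact tendsto_atBot_mono hbound this
    · right
      constructor
      · refine ⟨L - M + S, ?_⟩
        have : Tendsto (fun n => U n - P n + Q n) atTop (𝓝 (L - M + S)) :=
          (hU.sub hP).add hQ
        exact this.congr (fun n => (hYeq n).symm)
      · exact summable_of_sum_range_le hW (fun n => hPmono.ge_of_tendsto hP n)
end

section
/- Consider the SUM iterates m_0 = 0, m_t = μ m_{t−1} − η_t g_t, x_{t+1} = x_t − λ η_t g_t + (1 − λ̃) m_t, with μ ∈ (0,1), λ ∈ [0, 1/(1−μ)], λ̃ = (1−μ)λ, and random vectors g_t in ℝ^d satisfying E‖g_t‖² ≤ G². If the step sizes satisfy ∑_{t=1}^∞ η_t = ∞ and ∑_{t=1}^∞ η_t² < ∞, then ∑_{t=1}^∞ E‖x_{t+1} − x_t‖² < ∞ and ∑_{t=1}^∞ ( ∑_{k=1}^{t−1} μ^{t−k} E‖m_k‖² ) < ∞. -/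
set_option maxHeartbeats 1000000


open Finset MeasureTheory

private lemma sq_ineq (μ a b c : ℝ) (hμ0 : 0 < μ) (hμ1 : μ < 1) (ha : 0 ≤ a)
    (hb : 0 ≤ b) (hc : 0 ≤ c) :
    (μ * a + c * b) ^ 2 ≤ μ * a ^ 2 + c ^ 2 / (1 - μ) * b ^ 2 := by
  have h1 : 0 < 1 - μ := by linarith
  rw [div_mul_eq_mul_div, ← sub_le_iff_le_add', le_div_iff₀ h1]
  nlinarith [sq_nonneg ((1 - μ) * a - c * b)]

/-- Lemma 3.3: for the SUM iterates with `E‖g_t‖² ≤ G²`, `∑ η_t = ∞`, `∑ η_t² < ∞`,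
one has `∑_t E‖x_{t+1} − x_t‖² < ∞` and `∑_t ∑_{k=1}^{t−1} μ^{t−k} E‖m_k‖² < ∞`. -/
theorem lemma_3_3 (d : ℕ) (hd : 0 < d)
    {Ω : Type} [MeasurableSpace Ω] (P : Measure Ω) [IsProbabilityMeasure P]
    (μ lam G : ℝ) (hμ : μ ∈ Set.Ioo (0 : ℝ) 1)
    (hlam : lam ∈ Set.Icc (0 : ℝ) (1 / (1 - μ)))
    (η : ℕ → ℝ) (hη : ∀ t, 0 < η t)
    (hdiv : ¬ Summable η) (hsq : Summable (fun t => η t ^ 2))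
    (g : ℕ → Ω → EuclideanSpace ℝ (Fin d))
    (hgL2 : ∀ t, MemLp (g t) 2 P)
    (hg2 : ∀ t, ∫ ω, ‖g t ω‖ ^ 2 ∂P ≤ G ^ 2)
    (m x : ℕ → Ω → EuclideanSpace ℝ (Fin d))
    (hm0 : m 0 = fun _ => 0)
    (hm : ∀ t, 1 ≤ t → m t = fun ω => μ • m (t - 1) ω - η t • g t ω)
    (hx : ∀ t, 1 ≤ t →
      x (t + 1) = fun ω => x t ω - (lam * η t) • g t ω + (1 - (1 - μ) * lam) • m t ω) :
    Summable (fun t => ∫ ω, ‖x (t + 1) ω - x t ω‖ ^ 2 ∂P) ∧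
      Summable (fun t => ∑ k ∈ Finset.Icc 1 (t - 1), μ ^ (t - k) * ∫ ω, ‖m k ω‖ ^ 2 ∂P) := by
  obtain ⟨hμ0, hμ1⟩ := hμ
  have h1μ : (0:ℝ) < 1 - μ := by linarith
  -- L2 membership of m
  have hmL2 : ∀ t, MemLp (m t) 2 P := by
    intro t
    induction t with
    | zero => rw [hm0]; exact memLp_const 0
    | succ n ih =>
      rw [hm (n + 1) (by omega)]
      simp only [Nat.add_sub_cancel]
      exact (ih.const_smul μ).sub ((hgL2 (n + 1)).const_smul (η (n + 1)))
  have hmInt : ∀ t, Integrable (fun ω => ‖m t ω‖ ^ 2) P := fun t =>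
    (memLp_two_iff_integrable_sq_norm (hmL2 t).aestronglyMeasurable).mp (hmL2 t)
  have hgInt : ∀ t, Integrable (fun ω => ‖g t ω‖ ^ 2) P := fun t =>
    (memLp_two_iff_integrable_sq_norm (hgL2 t).aestronglyMeasurable).mp (hgL2 t)
  set a : ℕ → ℝ := fun t => ∫ ω, ‖m t ω‖ ^ 2 ∂P with ha
  have ha0 : ∀ t, 0 ≤ a t := fun t => integral_nonneg (fun ω => by positivity)
  set K : ℝ := G ^ 2 / (1 - μ) with hK
  have hG0 : (0:ℝ) ≤ G ^ 2 := le_trans (integral_nonneg (fun ω => by positivity)) (hg2 0)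
  have hK0 : 0 ≤ K := div_nonneg hG0 h1μ.le
  -- key recursion
  have key : ∀ t : ℕ, 1 ≤ t → a t ≤ μ * a (t - 1) + η t ^ 2 / (1 - μ) * G ^ 2 := by
    intro t ht
    have hstep : a t ≤ ∫ ω, (μ * ‖m (t - 1) ω‖ ^ 2 + η t ^ 2 / (1 - μ) * ‖g t ω‖ ^ 2) ∂P := by
      apply integral_mono (hmInt t)
        (((hmInt (t - 1)).const_mul μ).add ((hgInt t).const_mul (η t ^ 2 / (1 - μ))))
      intro ω
      rw [hm t ht]
      calc ‖μ • m (t - 1) ω - η t • g t ω‖ ^ 2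
          ≤ (μ * ‖m (t - 1) ω‖ + η t * ‖g t ω‖) ^ 2 := by
            apply pow_le_pow_left₀ (norm_nonneg _)
            calc ‖μ • m (t - 1) ω - η t • g t ω‖
                ≤ ‖μ • m (t - 1) ω‖ + ‖η t • g t ω‖ := norm_sub_le _ _
              _ = μ * ‖m (t - 1) ω‖ + η t * ‖g t ω‖ := by
                  rw [norm_smul, norm_smul, Real.norm_eq_abs, Real.norm_eq_abs,
                    abs_of_pos hμ0, abs_of_pos (hη t)]
        _ ≤ μ * ‖m (t - 1) ω‖ ^ 2 + (η t) ^ 2 / (1 - μ) * ‖g t ω‖ ^ 2 :=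
            sq_ineq μ (‖m (t - 1) ω‖) (‖g t ω‖) (η t) hμ0 hμ1 (norm_nonneg _)
              (norm_nonneg _) (hη t).le
    calc a t ≤ ∫ ω, (μ * ‖m (t - 1) ω‖ ^ 2 + η t ^ 2 / (1 - μ) * ‖g t ω‖ ^ 2) ∂P := hstep
      _ = μ * a (t - 1) + η t ^ 2 / (1 - μ) * (∫ ω, ‖g t ω‖ ^ 2 ∂P) := by
          rw [integral_add ((hmInt (t - 1)).const_mul μ) ((hgInt t).const_mul _),
            integral_const_mul, integral_const_mul]
      _ ≤ μ * a (t - 1) + η t ^ 2 / (1 - μ) * G ^ 2 :=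
          add_le_add_right (mul_le_mul_of_nonneg_left (hg2 t)
            (div_nonneg (sq_nonneg _) h1μ.le)) _
  -- unrolled bound
  set c : ℕ → ℝ := fun t => ∑ k ∈ Icc 1 t, μ ^ (t - k) * η k ^ 2 with hc
  have hc0 : ∀ t, 0 ≤ c t := fun t => Finset.sum_nonneg fun k _ => by positivity
  have hub : ∀ t, a t ≤ K * c t := by
    intro t
    induction t with
    | zero =>
      have hz : a 0 = 0 := by simp [ha, hm0]
      rw [hz]
      exact mul_nonneg hK0 (hc0 0)
    | succ n ih =>
      have h1 := key (n + 1) (by omega)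
      simp only [Nat.add_sub_cancel] at h1
      have hcs : c (n + 1) = μ * c n + η (n + 1) ^ 2 := by
        simp only [hc]
        rw [Finset.sum_Icc_succ_top (by omega : 1 ≤ n + 1)]
        simp only [Nat.sub_self, pow_zero, one_mul]
        congr 1
        rw [Finset.mul_sum]
        apply Finset.sum_congr rfl
        intro k hk
        have hk' : k ≤ n := (Finset.mem_Icc.mp hk).2
        rw [show n + 1 - k = (n - k) + 1 by omega, pow_succ]
        ring
      rw [hcs]
      calc a (n + 1) ≤ μ * a n + η (n + 1) ^ 2 / (1 - μ) * G ^ 2 := h1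
        _ ≤ μ * (K * c n) + η (n + 1) ^ 2 / (1 - μ) * G ^ 2 := by
            gcongr
        _ = K * (μ * c n + η (n + 1) ^ 2) := by
            rw [hK]; field_simp
  -- summability of c via Cauchy product
  have hgeo : Summable (fun n => ‖μ ^ n‖) := by
    simp only [norm_pow, Real.norm_eq_abs, abs_of_pos hμ0]
    exact summable_geometric_of_lt_one hμ0.le hμ1
  have hsqn : Summable (fun n => ‖η n ^ 2‖) := by
    simpa only [Real.norm_eq_abs] using hsq.abs
  have hconv : Summable (fun n => ∑ k ∈ range (n + 1), η k ^ 2 * μ ^ (n - k)) := by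
    have := summable_norm_sum_mul_range_of_summable_norm hsqn hgeo
    exact this.of_norm
  have hcle : ∀ t, c t ≤ ∑ k ∈ range (t + 1), η k ^ 2 * μ ^ (t - k) := by
    intro t
    simp only [hc]
    calc (∑ k ∈ Icc 1 t, μ ^ (t - k) * η k ^ 2)
        = ∑ k ∈ Icc 1 t, η k ^ 2 * μ ^ (t - k) := by
          apply Finset.sum_congr rfl; intro k _; ring
      _ ≤ ∑ k ∈ range (t + 1), η k ^ 2 * μ ^ (t - k) := by
          apply Finset.sum_le_sum_of_subset_of_nonneg
          · intro k hk
            simp only [Finset.mem_Icc] at hk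
            simp only [Finset.mem_range]; omega
          · intro k _ _; positivity
  have hcsum : Summable c := hconv.of_nonneg_of_le hc0 hcle
  constructor
  · -- first statement
    set e : ℕ → ℝ := fun t => ∫ ω, ‖x (t + 1) ω - x t ω‖ ^ 2 ∂P with he
    have he0 : ∀ t, 0 ≤ e t := fun t => integral_nonneg fun ω => by positivity
    have hebd : ∀ t, 1 ≤ t →
        e t ≤ 2 * (lam * η t) ^ 2 * G ^ 2 + 2 * (1 - (1 - μ) * lam) ^ 2 * (K * c t) := by
      intro t ht
      have hdiff : ∀ ω, x (t + 1) ω - x t ω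
          = (1 - (1 - μ) * lam) • m t ω - (lam * η t) • g t ω := by
        intro ω
        rw [hx t ht]
        beta_reduce
        abel
      have hstep : e t ≤ ∫ ω, (2 * (lam * η t) ^ 2 * ‖g t ω‖ ^ 2
          + 2 * (1 - (1 - μ) * lam) ^ 2 * ‖m t ω‖ ^ 2) ∂P := by
        apply integral_mono
        · have : MemLp (fun ω => x (t + 1) ω - x t ω) 2 P := by
            have : (fun ω => x (t + 1) ω - x t ω)
                = fun ω => (1 - (1 - μ) * lam) • m t ω - (lam * η t) • g t ω := by
              funext ω; exact hdiff ω
            rw [this]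
            exact ((hmL2 t).const_smul (1 - (1 - μ) * lam)).sub ((hgL2 t).const_smul (lam * η t))
          exact (memLp_two_iff_integrable_sq_norm this.aestronglyMeasurable).mp this
        · exact (((hgInt t).const_mul _).add ((hmInt t).const_mul _))
        intro ω
        show ‖x (t + 1) ω - x t ω‖ ^ 2 ≤ 2 * (lam * η t) ^ 2 * ‖g t ω‖ ^ 2
          + 2 * (1 - (1 - μ) * lam) ^ 2 * ‖m t ω‖ ^ 2
        rw [hdiff ω]
        calc ‖(1 - (1 - μ) * lam) • m t ω - (lam * η t) • g t ω‖ ^ 2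
            ≤ (‖(1 - (1 - μ) * lam) • m t ω‖ + ‖(lam * η t) • g t ω‖) ^ 2 :=
              pow_le_pow_left₀ (norm_nonneg _) (norm_sub_le _ _) 2
          _ ≤ 2 * ‖(lam * η t) • g t ω‖ ^ 2 + 2 * ‖(1 - (1 - μ) * lam) • m t ω‖ ^ 2 := by
              nlinarith [sq_nonneg (‖(1 - (1 - μ) * lam) • m t ω‖ - ‖(lam * η t) • g t ω‖)]
          _ = 2 * (lam * η t) ^ 2 * ‖g t ω‖ ^ 2
              + 2 * (1 - (1 - μ) * lam) ^ 2 * ‖m t ω‖ ^ 2 := by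
              rw [norm_smul, norm_smul, mul_pow, mul_pow, Real.norm_eq_abs,
                Real.norm_eq_abs, sq_abs, sq_abs]
              ring
      calc e t ≤ _ := hstep
        _ = 2 * (lam * η t) ^ 2 * (∫ ω, ‖g t ω‖ ^ 2 ∂P)
            + 2 * (1 - (1 - μ) * lam) ^ 2 * a t := by
            rw [integral_add ((hgInt t).const_mul _) ((hmInt t).const_mul _),
              integral_const_mul, integral_const_mul]
        _ ≤ 2 * (lam * η t) ^ 2 * G ^ 2 + 2 * (1 - (1 - μ) * lam) ^ 2 * (K * c t) :=
            add_le_add (mul_le_mul_of_nonneg_left (hg2 t) (by positivity))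
              (mul_le_mul_of_nonneg_left (hub t) (by positivity))
    -- summable bound
    have hbd : Summable (fun t => 2 * (lam * η t) ^ 2 * G ^ 2
        + 2 * (1 - (1 - μ) * lam) ^ 2 * (K * c t)) := by
      apply Summable.add
      · have : Summable (fun t => (2 * lam ^ 2 * G ^ 2) * η t ^ 2) := hsq.mul_left _
        apply this.congr
        intro t; ring
      · exact (hcsum.mul_left _).mul_left _
    have hshift : Summable (fun t : ℕ => 2 * (lam * η (t + 1)) ^ 2 * G ^ 2
        + 2 * (1 - (1 - μ) * lam) ^ 2 * (K * c (t + 1))) :=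
      (summable_nat_add_iff (f := fun t => 2 * (lam * η t) ^ 2 * G ^ 2
        + 2 * (1 - (1 - μ) * lam) ^ 2 * (K * c t)) 1).mpr hbd
    have hse : Summable (fun t : ℕ => e (t + 1)) :=
      hshift.of_nonneg_of_le (fun t => he0 _) (fun t => hebd (t + 1) (by omega))
    exact (summable_nat_add_iff (f := e) 1).mp hse
  · -- second statement
    have hconv2 : Summable (fun n => ∑ k ∈ range (n + 1), c k * μ ^ (n - k)) := by
      have hcn : Summable (fun n => ‖c n‖) := by
        simpa only [Real.norm_eq_abs] using hcsum.abs
      exact (summable_norm_sum_mul_range_of_summable_norm hcn hgeo).of_norm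
    apply Summable.of_nonneg_of_le
      (fun t => Finset.sum_nonneg fun k _ => mul_nonneg (by positivity) (ha0 k))
      (fun t => ?_) (hconv2.mul_left K)
    calc (∑ k ∈ Icc 1 (t - 1), μ ^ (t - k) * a k)
        ≤ ∑ k ∈ Icc 1 (t - 1), μ ^ (t - k) * (K * c k) := by
          apply Finset.sum_le_sum
          intro k _
          exact mul_le_mul_of_nonneg_left (hub k) (by positivity)
      _ = ∑ k ∈ Icc 1 (t - 1), K * (c k * μ ^ (t - k)) := by
          apply Finset.sum_congr rfl; intro k _; ring
      _ = K * ∑ k ∈ Icc 1 (t - 1), c k * μ ^ (t - k) := by rw [Finset.mul_sum]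
      _ ≤ K * ∑ k ∈ range (t + 1), c k * μ ^ (t - k) := by
          apply mul_le_mul_of_nonneg_left _ hK0
          apply Finset.sum_le_sum_of_subset_of_nonneg
          · intro k hk
            simp only [Finset.mem_Icc] at hk
            simp only [Finset.mem_range]; omega
          · intro k _ _
            exact mul_nonneg (hc0 k) (by positivity)
end

section
/- Consider the SUM iterates m_0 = 0, m_t = μ m_{t−1} − η_t g_t, x_{t+1} = x_t − λ η_t g_t + (1 − λ̃) m_t, with μ ∈ (0,1), λ ∈ [0, 1/(1−μ)], λ̃ = (1−μ)λ. Assume f : ℝ^d → ℝ is differentiable with L-Lipschitz gradient, E[g_t | ℱ_{t−1}] = ∇f(x_t) almost surely, and E‖g_t‖² ≤ G². Then for every t ≥ 1: E[⟨∇f(x_t), m_t⟩] ≤ −∑_{k=1}^{t} μ^{t−k} η_k E‖∇f(x_k)‖² + 2L ∑_{k=1}^{t−1} μ^{t−k} E‖m_k‖² + L λ² G² ∑_{k=1}^{t−1} μ^{t−k} η_k². -/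
open Finset MeasureTheory

lemma aux_integrable_inner {Ω : Type} [MeasurableSpace Ω] {P : Measure Ω} {d : ℕ}
    {f h : Ω → EuclideanSpace ℝ (Fin d)} (hf : MemLp f 2 P) (hh : MemLp h 2 P) :
    Integrable (fun ω => (inner ℝ (f ω) (h ω) : ℝ)) P := by
  have h2 := L2.integrable_inner (𝕜 := ℝ) (hf.toLp f) (hh.toLp h)
  refine h2.congr ?_
  filter_upwards [hf.coeFn_toLp, hh.coeFn_toLp] with ω e1 e2
  rw [e1, e2]

lemma aux_integral_inner_eq_zero {Ω : Type} [m0 : MeasurableSpace Ω] {P : Measure Ω}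
    [IsProbabilityMeasure P] {d : ℕ} {m' : MeasurableSpace Ω} (hm' : m' ≤ m0)
    {h u : Ω → EuclideanSpace ℝ (Fin d)}
    (hh : AEStronglyMeasurable[m'] h P) (hh2 : MemLp h 2 P) (hu : MemLp u 2 P)
    (hcond : P[u|m'] =ᵐ[P] 0) :
    ∫ ω, (inner ℝ (h ω) (u ω) : ℝ) ∂P = 0 := by
  have hHmeas : AEStronglyMeasurable[m'] (hh2.toLp h : Ω → EuclideanSpace ℝ (Fin d)) P :=
    hh.congr hh2.coeFn_toLp.symm
  have hcz : (condExpL2 (EuclideanSpace ℝ (Fin d)) ℝ hm' (hu.toLp u) :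
      Lp (EuclideanSpace ℝ (Fin d)) 2 P) =ᵐ[P] 0 := by
    refine Lp.ae_eq_zero_of_forall_setIntegral_eq_zero' ℝ hm' _ two_ne_zero (by norm_num)
      (fun s hs hμs => ?_) (fun s hs hμs => ?_) ?_
    · exact integrableOn_condExpL2_of_measure_ne_top hm' hμs.ne _
    · rw [integral_condExpL2_eq hm' (hu.toLp u) hs hμs.ne]
      have e1 : ∫ ω in s, (hu.toLp u : Ω → EuclideanSpace ℝ (Fin d)) ω ∂P = ∫ ω in s, u ω ∂P :=
        integral_congr_ae (ae_restrict_of_ae hu.coeFn_toLp)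
      have e2 : ∫ ω in s, (P[u|m']) ω ∂P = ∫ ω in s, u ω ∂P :=
        setIntegral_condExp hm' (hu.integrable one_le_two) hs
      have e3 : ∫ ω in s, (P[u|m']) ω ∂P = 0 := by
        rw [integral_congr_ae (ae_restrict_of_ae hcond)]
        simp
      rw [e1, ← e2, e3]
    · exact aestronglyMeasurable_condExpL2 (𝕜 := ℝ) hm' (hu.toLp u)
  have e1 : (inner ℝ (hh2.toLp h) (hu.toLp u) : ℝ)
      = ∫ ω, (inner ℝ ((hh2.toLp h : Ω → EuclideanSpace ℝ (Fin d)) ω)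
          ((hu.toLp u : Ω → EuclideanSpace ℝ (Fin d)) ω) : ℝ) ∂P :=
    L2.inner_def (𝕜 := ℝ) (hh2.toLp h) (hu.toLp u)
  have e2 : ∫ ω, (inner ℝ ((hh2.toLp h : Ω → EuclideanSpace ℝ (Fin d)) ω)
      ((hu.toLp u : Ω → EuclideanSpace ℝ (Fin d)) ω) : ℝ) ∂P
      = ∫ ω, (inner ℝ (h ω) (u ω) : ℝ) ∂P := by
    refine integral_congr_ae ?_
    filter_upwards [hh2.coeFn_toLp, hu.coeFn_toLp] with ω a1 a2
    rw [a1, a2]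
  have e4 : (inner ℝ ((condExpL2 (EuclideanSpace ℝ (Fin d)) ℝ hm' (hu.toLp u) :
        Lp (EuclideanSpace ℝ (Fin d)) 2 P)) (hh2.toLp h)) = inner ℝ (hu.toLp u) (hh2.toLp h) :=
    inner_condExpL2_eq_inner_fun hm' (hu.toLp u) (hh2.toLp h) hHmeas
  have e5 : (inner ℝ ((condExpL2 (EuclideanSpace ℝ (Fin d)) ℝ hm' (hu.toLp u) :
      Lp (EuclideanSpace ℝ (Fin d)) 2 P)) (hh2.toLp h)) = 0 := by
    rw [L2.inner_def (𝕜 := ℝ)]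
    have : ∀ᵐ ω ∂P, (inner ℝ ((condExpL2 (EuclideanSpace ℝ (Fin d)) ℝ hm' (hu.toLp u) :
        Lp (EuclideanSpace ℝ (Fin d)) 2 P) ω)
        ((hh2.toLp h : Ω → EuclideanSpace ℝ (Fin d)) ω) : ℝ) = 0 := by
      filter_upwards [hcz] with ω hω
      rw [hω]
      simp
    rw [integral_congr_ae this, integral_zero]
  rw [← e2, ← e1, real_inner_comm, ← e4, e5]

open Finset MeasureTheory

lemma aux_sum_shift (μ : ℝ) (T : ℕ) (c : ℕ → ℝ) :
    ∑ k ∈ Finset.Icc 1 (T + 1), μ ^ (T + 2 - k) * c k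
      = μ * (∑ k ∈ Finset.Icc 1 T, μ ^ (T + 1 - k) * c k) + μ * c (T + 1) := by
  rw [Finset.sum_Icc_succ_top (by omega : 1 ≤ T + 1), Finset.mul_sum]
  congr 1
  · refine Finset.sum_congr rfl fun k hk => ?_
    have hk' : k ≤ T := (Finset.mem_Icc.mp hk).2
    have h1 : T + 2 - k = (T + 1 - k) + 1 := by omega
    rw [h1, pow_succ]; ring
  · have h2 : T + 2 - (T + 1) = 1 := by omega
    rw [h2, pow_one]

lemma aux_sum_shift' (μ : ℝ) (T : ℕ) (c : ℕ → ℝ) :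
    ∑ k ∈ Finset.Icc 1 (T + 2), μ ^ (T + 2 - k) * c k
      = μ * (∑ k ∈ Finset.Icc 1 (T + 1), μ ^ (T + 1 - k) * c k) + c (T + 2) := by
  rw [Finset.sum_Icc_succ_top (by omega : 1 ≤ T + 2), Finset.mul_sum]
  congr 1
  · refine Finset.sum_congr rfl fun k hk => ?_
    have hk' : k ≤ T + 1 := (Finset.mem_Icc.mp hk).2
    have h1 : T + 2 - k = (T + 1 - k) + 1 := by omega
    rw [h1, pow_succ]; ring
  · have h2 : T + 2 - (T + 2) = 0 := by omega
    rw [h2, pow_zero, one_mul]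
open Finset MeasureTheory


/-- The σ-algebra `ℱ_t = σ(g_1, …, g_t)` generated by the first `t` stochastic gradients. -/
def sigmaGen {Ω : Type} [MeasurableSpace Ω] {d : ℕ}
    (g : ℕ → Ω → EuclideanSpace ℝ (Fin d)) (t : ℕ) : MeasurableSpace Ω :=
  ⨆ k ∈ Set.Icc 1 t, MeasurableSpace.comap (g k) inferInstance

section Infra
variable {Ω : Type} [MeasurableSpace Ω] {d : ℕ} {g : ℕ → Ω → EuclideanSpace ℝ (Fin d)}


lemma sigmaGen_le (hgmeas : ∀ t, Measurable (g t)) (t : ℕ) :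
    sigmaGen g t ≤ ‹MeasurableSpace Ω› :=
  iSup₂_le fun k _ => (hgmeas k).comap_le

lemma sigmaGen_mono {s t : ℕ} (hst : s ≤ t) : sigmaGen g s ≤ sigmaGen g t :=
  iSup₂_le fun k hk => le_iSup₂ (f := fun k (_ : k ∈ Set.Icc 1 t) =>
    MeasurableSpace.comap (g k) inferInstance) k ⟨hk.1, hk.2.trans hst⟩

lemma measurable_sigmaGen {k t : ℕ} (h1 : 1 ≤ k) (h2 : k ≤ t) :
    Measurable[sigmaGen g t] (g k) :=
  Measurable.of_comap_le (le_iSup₂ (f := fun k (_ : k ∈ Set.Icc 1 t) =>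
    MeasurableSpace.comap (g k) inferInstance) k ⟨h1, h2⟩)

end Infra

set_option maxHeartbeats 2000000 in
/-- Lemma 3.4: for the SUM iterates with unbiased stochastic gradients,
`E[⟨∇f(x_t), m_t⟩] ≤ −∑_{k=1}^{t} μ^{t−k} η_k E‖∇f(x_k)‖²
  + 2L ∑_{k=1}^{t−1} μ^{t−k} E‖m_k‖² + L λ² G² ∑_{k=1}^{t−1} μ^{t−k} η_k²`. -/
theorem lemma_3_4 (d : ℕ) (hd : 0 < d)
    {Ω : Type} [MeasurableSpace Ω] (P : Measure Ω) [IsProbabilityMeasure P]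
    (μ lam G L : ℝ) (hμ : μ ∈ Set.Ioo (0 : ℝ) 1)
    (hlam : lam ∈ Set.Icc (0 : ℝ) (1 / (1 - μ)))
    (η : ℕ → ℝ) (hη : ∀ t, 0 < η t)
    (g : ℕ → Ω → EuclideanSpace ℝ (Fin d))
    (hgmeas : ∀ t, Measurable (g t))
    (hgL2 : ∀ t, MemLp (g t) 2 P)
    (hg2 : ∀ t, ∫ ω, ‖g t ω‖ ^ 2 ∂P ≤ G ^ 2)
    (f : EuclideanSpace ℝ (Fin d) → ℝ) (f' : EuclideanSpace ℝ (Fin d) → EuclideanSpace ℝ (Fin d))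
    (hf : ∀ y, HasGradientAt f (f' y) y)
    (hLip : ∀ y z, ‖f' y - f' z‖ ≤ L * ‖y - z‖)
    (m x : ℕ → Ω → EuclideanSpace ℝ (Fin d))
    (x1 : EuclideanSpace ℝ (Fin d)) (hx1 : x 1 = fun _ => x1)
    (hm0 : m 0 = fun _ => 0)
    (hm : ∀ t, 1 ≤ t → m t = fun ω => μ • m (t - 1) ω - η t • g t ω)
    (hx : ∀ t, 1 ≤ t →
      x (t + 1) = fun ω => x t ω - (lam * η t) • g t ω + (1 - (1 - μ) * lam) • m t ω)
    (hunbias : ∀ t, 1 ≤ t →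
      P[g t | sigmaGen g (t - 1)] =ᵐ[P] fun ω => f' (x t ω)) :
    ∀ t, 1 ≤ t →
      ∫ ω, (inner ℝ (f' (x t ω)) (m t ω) : ℝ) ∂P ≤
        -(∑ k ∈ Finset.Icc 1 t, μ ^ (t - k) * η k * ∫ ω, ‖f' (x k ω)‖ ^ 2 ∂P)
          + 2 * L * ∑ k ∈ Finset.Icc 1 (t - 1), μ ^ (t - k) * ∫ ω, ‖m k ω‖ ^ 2 ∂P
          + L * lam ^ 2 * G ^ 2 * ∑ k ∈ Finset.Icc 1 (t - 1), μ ^ (t - k) * η k ^ 2 := by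
  obtain ⟨hμ0, hμ1⟩ := hμ
  obtain ⟨hlam0, hlam1⟩ := hlam
  have hμ0' : (0:ℝ) ≤ μ := le_of_lt hμ0
  -- L is nonnegative
  have hL0 : 0 ≤ L := by
    have h1 := hLip (EuclideanSpace.single ⟨0, hd⟩ (1:ℝ)) 0
    rw [sub_zero] at h1
    have h2 : ‖(EuclideanSpace.single (⟨0, hd⟩ : Fin d) (1:ℝ))‖ = 1 := by
      rw [EuclideanSpace.norm_single]; norm_num
    rw [h2, mul_one] at h1
    exact le_trans (norm_nonneg _) h1
  -- bounds on the interpolation factor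
  have hlt0 : 0 ≤ 1 - (1 - μ) * lam := by
    have h3 : (1 - μ) * lam ≤ (1 - μ) * (1 / (1 - μ)) :=
      mul_le_mul_of_nonneg_left hlam1 (by linarith)
    rw [mul_one_div, div_self (by linarith : (1:ℝ) - μ ≠ 0)] at h3
    linarith
  have hlt1 : 1 - (1 - μ) * lam ≤ 1 := by nlinarith
  -- Lipschitz continuity of f'
  have hf'cont : Continuous f' := by
    have hl : LipschitzWith (Real.toNNReal L) f' := by
      apply LipschitzWith.of_dist_le_mul
      intro y z
      rw [dist_eq_norm, dist_eq_norm, Real.coe_toNNReal L hL0]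
      exact hLip y z
    exact hl.continuous
  have hf'bound : ∀ y : EuclideanSpace ℝ (Fin d), ‖f' y‖ ≤ ‖f' 0‖ + L * ‖y‖ := by
    intro y
    have h1 := hLip y 0
    rw [sub_zero] at h1
    have h2 := norm_sub_norm_le (f' y) (f' 0)
    linarith
  -- strong measurability of the iterates
  have hmSM : ∀ t, StronglyMeasurable[sigmaGen g t] (m t) := by
    intro t
    induction t with
    | zero => rw [hm0]; exact stronglyMeasurable_const
    | succ n ih =>
      rw [hm (n+1) (by omega)]
      simp only [Nat.add_sub_cancel]
      exact ((ih.mono (sigmaGen_mono (Nat.le_succ n))).const_smul μ).sub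
        (((measurable_sigmaGen (g := g) (by omega) le_rfl).stronglyMeasurable).const_smul (η (n+1)))
  have hxSM : ∀ t, 1 ≤ t → StronglyMeasurable[sigmaGen g (t-1)] (x t) := by
    refine Nat.le_induction ?_ ?_
    · rw [hx1]; exact stronglyMeasurable_const
    · intro n hn ih
      rw [hx n hn]
      show StronglyMeasurable[sigmaGen g n] _
      have h1 : StronglyMeasurable[sigmaGen g n] (x n) :=
        ih.mono (sigmaGen_mono (by omega))
      exact ((h1.sub (((measurable_sigmaGen (g := g) hn le_rfl).stronglyMeasurable).const_smul
        (lam * η n))).add ((hmSM n).const_smul (1 - (1 - μ) * lam)))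
  -- L² membership of the iterates
  have hmL2 : ∀ t, MemLp (m t) 2 P := by
    intro t
    induction t with
    | zero => rw [hm0]; exact memLp_const 0
    | succ n ih =>
      rw [hm (n+1) (by omega)]
      simp only [Nat.add_sub_cancel]
      exact MemLp.sub (ih.const_smul μ) ((hgL2 (n+1)).const_smul (η (n+1)))
  have hxL2 : ∀ t, 1 ≤ t → MemLp (x t) 2 P := by
    refine Nat.le_induction ?_ ?_
    · rw [hx1]; exact memLp_const x1
    · intro n hn ih
      rw [hx n hn]
      exact MemLp.add (ih.sub ((hgL2 n).const_smul (lam * η n)))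
        ((hmL2 n).const_smul (1 - (1 - μ) * lam))
  have hfxSM : ∀ t, 1 ≤ t →
      StronglyMeasurable[sigmaGen g (t-1)] (fun ω => f' (x t ω)) := fun t ht =>
    hf'cont.comp_stronglyMeasurable (hxSM t ht)
  have hfxL2 : ∀ t, 1 ≤ t → MemLp (fun ω => f' (x t ω)) 2 P := by
    intro t ht
    have hsm : AEStronglyMeasurable (fun ω => f' (x t ω)) P :=
      ((hfxSM t ht).mono (sigmaGen_le hgmeas _)).aestronglyMeasurable
    have hb : MemLp (fun ω => ‖f' 0‖ + L * ‖x t ω‖) 2 P :=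
      MemLp.add (memLp_const _) (((hxL2 t ht).norm).const_mul L)
    refine MemLp.of_le hb hsm ?_
    filter_upwards with ω
    have h1 := hf'bound (x t ω)
    have h2 : (0:ℝ) ≤ ‖f' 0‖ + L * ‖x t ω‖ := by positivity
    calc ‖f' (x t ω)‖ ≤ ‖f' 0‖ + L * ‖x t ω‖ := h1
      _ ≤ ‖‖f' 0‖ + L * ‖x t ω‖‖ := le_abs_self _
  -- integrability of squared norms
  have hnsq : ∀ {u : Ω → EuclideanSpace ℝ (Fin d)}, MemLp u 2 P →
      Integrable (fun ω => ‖u ω‖^2) P := by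
    intro u hu
    refine (aux_integrable_inner hu hu).congr ?_
    filter_upwards with ω
    rw [real_inner_self_eq_norm_sq]
  -- the conditional expectation of g t - f'(x t) vanishes
  have hcondzero : ∀ t, 1 ≤ t →
      P[(fun ω => g t ω - f' (x t ω)) | sigmaGen g (t-1)] =ᵐ[P] 0 := by
    intro t ht
    have hint_g : Integrable (g t) P := (hgL2 t).integrable one_le_two
    have hint_f : Integrable (fun ω => f' (x t ω)) P := (hfxL2 t ht).integrable one_le_two
    have h1 := condExp_sub (m := sigmaGen g (t-1)) (μ := P) hint_g hint_f
    have h2 := condExp_of_aestronglyMeasurable' (sigmaGen_le hgmeas (t-1))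
      ((hfxSM t ht).aestronglyMeasurable) hint_f
    filter_upwards [h1, h2, hunbias t ht] with ω e1 e2 e3
    have : (fun ω => g t ω - f' (x t ω)) = g t - fun ω => f' (x t ω) := rfl
    rw [this] at *
    rw [e1]
    simp only [Pi.sub_apply, e2, e3]
    simp
  -- key identity: replacing g t with f'(x t) inside inner products
  have keyid : ∀ t, 1 ≤ t → ∀ h : Ω → EuclideanSpace ℝ (Fin d),
      StronglyMeasurable[sigmaGen g (t-1)] h → MemLp h 2 P →
      ∫ ω, (inner ℝ (h ω) (g t ω) : ℝ) ∂P = ∫ ω, (inner ℝ (h ω) (f' (x t ω)) : ℝ) ∂P := by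
    intro t ht h hsm hh2
    have hu : MemLp (fun ω => g t ω - f' (x t ω)) 2 P := (hgL2 t).sub (hfxL2 t ht)
    have h0 := aux_integral_inner_eq_zero (sigmaGen_le hgmeas (t-1))
      hsm.aestronglyMeasurable hh2 hu (hcondzero t ht)
    have hsub : ∫ ω, (inner ℝ (h ω) (g t ω - f' (x t ω)) : ℝ) ∂P
        = ∫ ω, (inner ℝ (h ω) (g t ω) : ℝ) ∂P - ∫ ω, (inner ℝ (h ω) (f' (x t ω)) : ℝ) ∂P := by
      simp_rw [inner_sub_right]
      exact integral_sub (aux_integrable_inner hh2 (hgL2 t))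
        (aux_integrable_inner hh2 (hfxL2 t ht))
    rw [hsub] at h0
    linarith
  -- squared-norm form of the key identity
  have keyid' : ∀ t, 1 ≤ t →
      ∫ ω, (inner ℝ (f' (x t ω)) (g t ω) : ℝ) ∂P = ∫ ω, ‖f' (x t ω)‖^2 ∂P := by
    intro t ht
    rw [keyid t ht _ (hfxSM t ht) (hfxL2 t ht)]
    refine integral_congr_ae ?_
    filter_upwards with ω
    rw [real_inner_self_eq_norm_sq]
  -- main induction
  refine Nat.le_induction ?_ ?_
  · -- base case t = 1
    have hpt : ∀ ω, (inner ℝ (f' (x 1 ω)) (m 1 ω) : ℝ)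
        = -(η 1 * inner ℝ (f' (x 1 ω)) (g 1 ω)) := by
      intro ω
      rw [hm 1 le_rfl]
      simp [hm0, inner_sub_right, inner_smul_right]
    rw [integral_congr_ae (Filter.Eventually.of_forall hpt), integral_neg, integral_const_mul,
      keyid' 1 le_rfl]
    have he : Finset.Icc 1 (1-1) = (∅ : Finset ℕ) := by decide
    rw [he]
    simp [Finset.Icc_self]
  · -- inductive step
    intro t ht IH
    obtain ⟨T, rfl⟩ : ∃ T, t = T + 1 := ⟨t - 1, by omega⟩
    simp only [Nat.add_sub_cancel] at IH ⊢
    -- step 1 : expand m (T+2)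
    have hstep1 : ∫ ω, (inner ℝ (f' (x (T+2) ω)) (m (T+2) ω) : ℝ) ∂P
        = μ * ∫ ω, (inner ℝ (f' (x (T+2) ω)) (m (T+1) ω) : ℝ) ∂P
          - η (T+2) * ∫ ω, ‖f' (x (T+2) ω)‖^2 ∂P := by
      have hpt : ∀ ω, (inner ℝ (f' (x (T+2) ω)) (m (T+2) ω) : ℝ)
          = μ * inner ℝ (f' (x (T+2) ω)) (m (T+1) ω)
            - η (T+2) * inner ℝ (f' (x (T+2) ω)) (g (T+2) ω) := by
        intro ω
        rw [hm (T+2) (by omega)]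
        simp [inner_sub_right, inner_smul_right]
      rw [integral_congr_ae (Filter.Eventually.of_forall hpt),
        integral_sub ((aux_integrable_inner (hfxL2 (T+2) (by omega)) (hmL2 (T+1))).const_mul μ)
          ((aux_integrable_inner (hfxL2 (T+2) (by omega)) (hgL2 (T+2))).const_mul (η (T+2))),
        integral_const_mul, integral_const_mul, keyid' (T+2) (by omega)]
    -- step 2 : descent inequality
    have hstep2 : ∫ ω, (inner ℝ (f' (x (T+2) ω)) (m (T+1) ω) : ℝ) ∂P
        ≤ ∫ ω, (inner ℝ (f' (x (T+1) ω)) (m (T+1) ω) : ℝ) ∂P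
          + L * lam^2 * η (T+1)^2 * G^2 + 2 * L * ∫ ω, ‖m (T+1) ω‖^2 ∂P := by
      have hint1 := aux_integrable_inner (hfxL2 (T+2) (by omega)) (hmL2 (T+1))
      have hint2 := aux_integrable_inner (hfxL2 (T+1) (by omega)) (hmL2 (T+1))
      have hintg := hnsq (hgL2 (T+1))
      have hintm := hnsq (hmL2 (T+1))
      have hpt : ∀ ω, (inner ℝ (f' (x (T+2) ω)) (m (T+1) ω) : ℝ)
            - inner ℝ (f' (x (T+1) ω)) (m (T+1) ω)
          ≤ L * lam^2 * η (T+1)^2 / 2 * ‖g (T+1) ω‖^2 + (3*L/2) * ‖m (T+1) ω‖^2 := by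
        intro ω
        have e1 : (inner ℝ (f' (x (T+2) ω)) (m (T+1) ω) : ℝ)
            - inner ℝ (f' (x (T+1) ω)) (m (T+1) ω)
            = inner ℝ (f' (x (T+2) ω) - f' (x (T+1) ω)) (m (T+1) ω) := (inner_sub_left _ _ _).symm
        have e2 : (inner ℝ (f' (x (T+2) ω) - f' (x (T+1) ω)) (m (T+1) ω) : ℝ)
            ≤ ‖f' (x (T+2) ω) - f' (x (T+1) ω)‖ * ‖m (T+1) ω‖ := real_inner_le_norm _ _
        have e3 : ‖f' (x (T+2) ω) - f' (x (T+1) ω)‖ ≤ L * ‖x (T+2) ω - x (T+1) ω‖ := hLip _ _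
        have e4 : ‖x (T+2) ω - x (T+1) ω‖ ≤ lam * η (T+1) * ‖g (T+1) ω‖ + ‖m (T+1) ω‖ := by
          rw [hx (T+1) (by omega)]
          have e5 : x (T+1) ω - (lam * η (T+1)) • g (T+1) ω
                + (1 - (1 - μ) * lam) • m (T+1) ω - x (T+1) ω
              = (1 - (1 - μ) * lam) • m (T+1) ω - (lam * η (T+1)) • g (T+1) ω := by
            abel
          rw [e5]
          calc ‖(1 - (1 - μ) * lam) • m (T+1) ω - (lam * η (T+1)) • g (T+1) ω‖
              ≤ ‖(1 - (1 - μ) * lam) • m (T+1) ω‖ + ‖(lam * η (T+1)) • g (T+1) ω‖ :=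
                norm_sub_le _ _
            _ = |1 - (1 - μ) * lam| * ‖m (T+1) ω‖ + |lam * η (T+1)| * ‖g (T+1) ω‖ := by
                rw [norm_smul, norm_smul, Real.norm_eq_abs, Real.norm_eq_abs]
            _ ≤ lam * η (T+1) * ‖g (T+1) ω‖ + ‖m (T+1) ω‖ := by
                rw [abs_of_nonneg hlt0, abs_of_nonneg
                  (mul_nonneg hlam0 (hη (T+1)).le)]
                nlinarith [norm_nonneg (m (T+1) ω)]
        have b0 := norm_nonneg (m (T+1) ω)
        have g0 := norm_nonneg (g (T+1) ω)
        have e6 : (inner ℝ (f' (x (T+2) ω) - f' (x (T+1) ω)) (m (T+1) ω) : ℝ)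
            ≤ L * (lam * η (T+1) * ‖g (T+1) ω‖ + ‖m (T+1) ω‖) * ‖m (T+1) ω‖ := by
          calc (inner ℝ (f' (x (T+2) ω) - f' (x (T+1) ω)) (m (T+1) ω) : ℝ)
              ≤ ‖f' (x (T+2) ω) - f' (x (T+1) ω)‖ * ‖m (T+1) ω‖ := e2
            _ ≤ L * ‖x (T+2) ω - x (T+1) ω‖ * ‖m (T+1) ω‖ :=
                mul_le_mul_of_nonneg_right e3 b0
            _ ≤ L * (lam * η (T+1) * ‖g (T+1) ω‖ + ‖m (T+1) ω‖) * ‖m (T+1) ω‖ :=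
                mul_le_mul_of_nonneg_right (mul_le_mul_of_nonneg_left e4 hL0) b0
        rw [e1]
        nlinarith [mul_nonneg hL0 (sq_nonneg (lam * η (T+1) * ‖g (T+1) ω‖ - ‖m (T+1) ω‖))]
      have hint : ∫ ω, ((inner ℝ (f' (x (T+2) ω)) (m (T+1) ω) : ℝ)
            - inner ℝ (f' (x (T+1) ω)) (m (T+1) ω)) ∂P
          ≤ ∫ ω, (L * lam^2 * η (T+1)^2 / 2 * ‖g (T+1) ω‖^2
            + (3*L/2) * ‖m (T+1) ω‖^2) ∂P :=
        integral_mono (hint1.sub hint2) ((hintg.const_mul _).add (hintm.const_mul _))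
          hpt
      rw [integral_sub hint1 hint2, integral_add (hintg.const_mul _) (hintm.const_mul _),
        integral_const_mul, integral_const_mul] at hint
      have hg2' := hg2 (T+1)
      have hM0 : 0 ≤ ∫ ω, ‖m (T+1) ω‖^2 ∂P := integral_nonneg fun ω => sq_nonneg _
      have hc0 : 0 ≤ L * lam^2 * η (T+1)^2 / 2 := by positivity
      have hG0 : (0:ℝ) ≤ G^2 := sq_nonneg _
      nlinarith [mul_le_mul_of_nonneg_left hg2' hc0, mul_nonneg hL0 hM0]
    -- combine with the induction hypothesis
    have hcomb := mul_le_mul_of_nonneg_left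
      (le_trans hstep2 (by linarith [IH] :
        ∫ ω, (inner ℝ (f' (x (T+1) ω)) (m (T+1) ω) : ℝ) ∂P
          + L * lam^2 * η (T+1)^2 * G^2 + 2 * L * ∫ ω, ‖m (T+1) ω‖^2 ∂P
        ≤ (-(∑ k ∈ Finset.Icc 1 (T+1), μ ^ (T+1-k) * η k * ∫ ω, ‖f' (x k ω)‖ ^ 2 ∂P)
          + 2 * L * ∑ k ∈ Finset.Icc 1 T, μ ^ (T+1-k) * ∫ ω, ‖m k ω‖ ^ 2 ∂P
          + L * lam ^ 2 * G ^ 2 * ∑ k ∈ Finset.Icc 1 T, μ ^ (T+1-k) * η k ^ 2)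
          + L * lam^2 * η (T+1)^2 * G^2 + 2 * L * ∫ ω, ‖m (T+1) ω‖^2 ∂P)) hμ0'
    -- algebraic identity for the sums
    have ha : ∑ k ∈ Finset.Icc 1 (T+2), μ ^ (T+2-k) * η k * ∫ ω, ‖f' (x k ω)‖ ^ 2 ∂P
        = μ * (∑ k ∈ Finset.Icc 1 (T+1), μ ^ (T+1-k) * η k * ∫ ω, ‖f' (x k ω)‖ ^ 2 ∂P)
          + η (T+2) * ∫ ω, ‖f' (x (T+2) ω)‖ ^ 2 ∂P := by
      have := aux_sum_shift' μ T (fun k => η k * ∫ ω, ‖f' (x k ω)‖ ^ 2 ∂P)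
      simp only [← mul_assoc] at this
      linarith [this]
    have hb : ∑ k ∈ Finset.Icc 1 (T+1), μ ^ (T+2-k) * ∫ ω, ‖m k ω‖ ^ 2 ∂P
        = μ * (∑ k ∈ Finset.Icc 1 T, μ ^ (T+1-k) * ∫ ω, ‖m k ω‖ ^ 2 ∂P)
          + μ * ∫ ω, ‖m (T+1) ω‖ ^ 2 ∂P :=
      aux_sum_shift μ T (fun k => ∫ ω, ‖m k ω‖ ^ 2 ∂P)
    have hc : ∑ k ∈ Finset.Icc 1 (T+1), μ ^ (T+2-k) * η k ^ 2
        = μ * (∑ k ∈ Finset.Icc 1 T, μ ^ (T+1-k) * η k ^ 2) + μ * η (T+1) ^ 2 :=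
      aux_sum_shift μ T (fun k => η k ^ 2)
    rw [hstep1]
    rw [ha, hb, hc] at *
    nlinarith [hcomb]
end

section
/- Let (η_t)_{t≥1} be positive real numbers with lim_{t→∞} η_{t−1}/η_t = 1, let μ ∈ (0,1), and define η̃_t := (1−μ) ∑_{k=1}^t μ^{t−k} η_k. Then lim_{t→∞} η_t/η̃_t = 1. -/
open Finset Filter Topology

/-- A sequence satisfying a contracting recursion with vanishing forcing tends to 0. -/
lemma contract_aux (e b : ℕ → ℝ) (ρ : ℝ) (hρ0 : 0 ≤ ρ) (hρ1 : ρ < 1)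
    (hrec : ∀ᶠ t in atTop, |e (t + 1)| ≤ ρ * |e t| + b t)
    (hb : Tendsto b atTop (𝓝 0)) :
    Tendsto e atTop (𝓝 0) := by
  rw [Metric.tendsto_atTop]
  intro ε hε
  have hε2 : (0 : ℝ) < ε * (1 - ρ) / 2 := by
    have : 0 < 1 - ρ := by linarith
    positivity
  obtain ⟨T, hT⟩ := eventually_atTop.mp
    (hrec.and (hb.eventually (gt_mem_nhds hε2)))
  have claim : ∀ n, |e (T + n)| ≤ ρ ^ n * |e T| + ε / 2 := by
    intro n
    induction n with
    | zero =>
      simp only [Nat.add_zero, pow_zero, one_mul]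
      linarith
    | succ n ih =>
      have h := hT (T + n) (by omega)
      have hb' : b (T + n) ≤ ε * (1 - ρ) / 2 := le_of_lt h.2
      have h1 : |e (T + n + 1)| ≤ ρ * |e (T + n)| + b (T + n) := h.1
      have h2 : ρ * |e (T + n)| ≤ ρ * (ρ ^ n * |e T| + ε / 2) := by
        apply mul_le_mul_of_nonneg_left ih hρ0
      have : |e (T + (n + 1))| = |e (T + n + 1)| := by ring_nf
      rw [this]
      have h2' : ρ * (ρ ^ n * |e T| + ε / 2) = ρ ^ (n + 1) * |e T| + ρ * ε / 2 := by
        ring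
      have h3 : ε * (1 - ρ) / 2 + ρ * ε / 2 = ε / 2 := by ring
      linarith
  have hpow : Tendsto (fun n => ρ ^ n * |e T|) atTop (𝓝 0) := by
    simpa using (tendsto_pow_atTop_nhds_zero_of_lt_one hρ0 hρ1).mul_const |e T|
  obtain ⟨N, hN⟩ := eventually_atTop.mp
    (hpow.eventually (gt_mem_nhds (by positivity : (0:ℝ) < ε / 2)))
  refine ⟨T + N, fun t ht => ?_⟩
  have hsplit : t = T + (t - T) := by omega
  have h1 : |e t| ≤ ρ ^ (t - T) * |e T| + ε / 2 := by
    have := claim (t - T); rwa [← hsplit] at this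
  have h2 : ρ ^ (t - T) * |e T| < ε / 2 := hN (t - T) (by omega)
  have : |e t| < ε := by linarith
  simpa [Real.dist_eq] using this

/-- If `η_{t−1}/η_t → 1` and `μ ∈ (0,1)`, then with
`η̃_t := (1−μ) ∑_{k=1}^t μ^{t−k} η_k` one has `η_t/η̃_t → 1`. -/
theorem eta_ratio_tendsto_one (η : ℕ → ℝ) (hη : ∀ t, 0 < η t)
    (μ : ℝ) (hμ : μ ∈ Set.Ioo (0 : ℝ) 1)
    (hratio : Tendsto (fun t => η t / η (t + 1)) atTop (𝓝 1)) :
    Tendsto (fun t => η t / ((1 - μ) * ∑ k ∈ Finset.Icc 1 t, μ ^ (t - k) * η k))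
      atTop (𝓝 1) := by
  obtain ⟨hμ0, hμ1⟩ := hμ
  have hμ1' : (0:ℝ) < 1 - μ := by linarith
  set L : ℝ := (1 - μ)⁻¹ with hLdef
  have hLpos : 0 < L := by positivity
  set S : ℕ → ℝ := fun t => ∑ k ∈ Finset.Icc 1 t, μ ^ (t - k) * η k with hSdef
  have hSrec : ∀ t, S (t + 1) = μ * S t + η (t + 1) := by
    intro t
    have hnotmem : (t + 1) ∉ Finset.Icc 1 t := by simp
    have hins : Finset.Icc 1 (t + 1) = insert (t + 1) (Finset.Icc 1 t) := by
      ext x; simp only [Finset.mem_Icc, Finset.mem_insert]; omega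
    simp only [hSdef, hins, Finset.sum_insert hnotmem, Nat.sub_self, pow_zero, one_mul]
    rw [Finset.mul_sum, add_comm]
    congr 1
    refine Finset.sum_congr rfl fun k hk => ?_
    rw [Finset.mem_Icc] at hk
    have h : t + 1 - k = (t - k) + 1 := by omega
    rw [h, pow_succ]
    ring
  have hSpos : ∀ t, 1 ≤ t → 0 < S t := by
    intro t ht
    apply Finset.sum_pos
    · intro k hk
      exact mul_pos (pow_pos hμ0 _) (hη k)
    · exact ⟨1, Finset.mem_Icc.mpr ⟨le_refl 1, ht⟩⟩
  set q : ℕ → ℝ := fun t => η t / η (t + 1) with hqdef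
  have hqpos : ∀ t, 0 < q t := fun t => div_pos (hη t) (hη (t + 1))
  set r : ℕ → ℝ := fun t => S t / η t with hrdef
  set e : ℕ → ℝ := fun t => r t - L with hedef
  have key : ∀ t, e (t + 1) = μ * q t * e t + μ * L * (q t - 1) := by
    intro t
    have h1 : η t ≠ 0 := (hη t).ne'
    have h2 : η (t + 1) ≠ 0 := (hη (t + 1)).ne'
    simp only [hedef, hrdef, hqdef, hSrec t, hLdef]
    field_simp
    ring
  -- recursion bound
  have hρ : (0:ℝ) ≤ (1 + μ) / 2 := by linarith
  have hρ1 : (1 + μ) / 2 < 1 := by linarith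
  have hqlim : Tendsto q atTop (𝓝 1) := hratio
  have hμq : Tendsto (fun t => μ * q t) atTop (𝓝 μ) := by
    simpa using hqlim.const_mul μ
  have hev : ∀ᶠ t in atTop, μ * q t < (1 + μ) / 2 :=
    hμq.eventually (gt_mem_nhds (by linarith))
  set b : ℕ → ℝ := fun t => μ * L * |q t - 1| with hbdef
  have hb : Tendsto b atTop (𝓝 0) := by
    have h0 : Tendsto (fun t => q t - 1) atTop (𝓝 0) := by
      simpa using hqlim.sub_const 1
    have := (h0.abs).const_mul (μ * L)
    simpa [hbdef] using this
  have hrec : ∀ᶠ t in atTop, |e (t + 1)| ≤ (1 + μ) / 2 * |e t| + b t := by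
    filter_upwards [hev] with t ht
    rw [key t]
    calc |μ * q t * e t + μ * L * (q t - 1)|
        ≤ |μ * q t * e t| + |μ * L * (q t - 1)| := abs_add_le _ _
      _ = (μ * q t) * |e t| + μ * L * |q t - 1| := by
          rw [abs_mul, abs_mul, abs_mul, abs_mul, abs_of_pos hμ0,
            abs_of_pos (hqpos t), abs_of_pos hLpos]
      _ ≤ (1 + μ) / 2 * |e t| + b t := by
          have := mul_le_mul_of_nonneg_right (le_of_lt ht) (abs_nonneg (e t))
          simp only [hbdef]
          linarith
  have he0 : Tendsto e atTop (𝓝 0) := contract_aux e b _ hρ hρ1 hrec hb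
  have hr : Tendsto r atTop (𝓝 L) := by
    have := he0.add_const L
    simpa [hedef] using this
  have hfin : Tendsto (fun t => ((1 - μ) * r t)⁻¹) atTop (𝓝 1) := by
    have h1 : Tendsto (fun t => (1 - μ) * r t) atTop (𝓝 ((1 - μ) * L)) :=
      hr.const_mul (1 - μ)
    have hL1 : (1 - μ) * L = 1 := by
      rw [hLdef]; field_simp
    rw [hL1] at h1
    simpa using h1.inv₀ (by norm_num)
  apply hfin.congr'
  filter_upwards [eventually_ge_atTop 1] with t ht
  have h1 : η t ≠ 0 := (hη t).ne'
  have h2 : S t ≠ 0 := (hSpos t ht).ne'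
  have h3 : (1 - μ) ≠ 0 := hμ1'.ne'
  simp only [hrdef]
  field_simp
  exact (div_self h2).symm
end

section
/- Consider the SUM iterates m_0 = 0, m_t = μ m_{t−1} − η_t g_t, x_{t+1} = x_t − λ η_t g_t + (1 − λ̃) m_t, with μ ∈ (0,1), λ ∈ [0, 1/(1−μ)], λ̃ = (1−μ)λ, positive step sizes η_t, and random vectors g_t in ℝ^d with E‖g_t‖ ≤ G for all t. Then for all t ≥ 1, E‖x_{t+1} − x_t‖ ≤ (G/(1−μ)) (η_t + η̃_t), where η̃_t := (1−μ) ∑_{k=1}^t μ^{t−k} η_k. -/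
open Finset MeasureTheory

/-- Inequality (52): for the SUM iterates with `E‖g_t‖ ≤ G`,
`E‖x_{t+1} − x_t‖ ≤ (G/(1−μ)) (η_t + η̃_t)` where `η̃_t = (1−μ) ∑_{k=1}^t μ^{t−k} η_k`. -/
theorem ineq_52 (d : ℕ) (hd : 0 < d)
    {Ω : Type} [MeasurableSpace Ω] (P : Measure Ω) [IsProbabilityMeasure P]
    (μ lam G : ℝ) (hμ : μ ∈ Set.Ioo (0 : ℝ) 1)
    (hlam : lam ∈ Set.Icc (0 : ℝ) (1 / (1 - μ)))
    (η : ℕ → ℝ) (hη : ∀ t, 0 < η t)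
    (g : ℕ → Ω → EuclideanSpace ℝ (Fin d))
    (hgInt : ∀ t, Integrable (g t) P)
    (hg1 : ∀ t, ∫ ω, ‖g t ω‖ ∂P ≤ G)
    (m x : ℕ → Ω → EuclideanSpace ℝ (Fin d))
    (hm0 : m 0 = fun _ => 0)
    (hm : ∀ t, 1 ≤ t → m t = fun ω => μ • m (t - 1) ω - η t • g t ω)
    (hx : ∀ t, 1 ≤ t →
      x (t + 1) = fun ω => x t ω - (lam * η t) • g t ω + (1 - (1 - μ) * lam) • m t ω) :
    ∀ t, 1 ≤ t →
      ∫ ω, ‖x (t + 1) ω - x t ω‖ ∂P ≤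
        G / (1 - μ) * (η t + (1 - μ) * ∑ k ∈ Finset.Icc 1 t, μ ^ (t - k) * η k) := by
  obtain ⟨hμ0, hμ1⟩ := hμ
  obtain ⟨hlam0, hlam1⟩ := hlam
  have h1μ : (0:ℝ) < 1 - μ := by linarith
  have hG : 0 ≤ G := le_trans (integral_nonneg fun ω => norm_nonneg _) (hg1 0)
  have hlA : (1 - μ) * lam ≤ 1 := by
    have := (le_div_iff₀ h1μ).mp hlam1; linarith
  have hc0 : 0 ≤ 1 - (1 - μ) * lam := by linarith
  have hc1 : 1 - (1 - μ) * lam ≤ 1 := by nlinarith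
  -- closed form for m
  have hmt : ∀ t, 1 ≤ t →
      m t = fun ω => -∑ k ∈ Finset.Icc 1 t, (μ ^ (t - k) * η k) • g k ω := by
    intro t ht
    induction t with
    | zero => omega
    | succ n ih =>
      rcases Nat.lt_or_ge n 1 with h | h
      · have hn : n = 0 := by omega
        subst hn
        rw [hm 1 le_rfl, hm0]
        funext ω
        simp
      · rw [hm (n + 1) (by omega)]
        simp only [Nat.add_sub_cancel]
        rw [ih h]
        funext ω
        have hsum : ∑ k ∈ Finset.Icc 1 (n+1), (μ ^ (n + 1 - k) * η k) • g k ω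
            = μ • (∑ k ∈ Finset.Icc 1 n, (μ ^ (n - k) * η k) • g k ω) + η (n+1) • g (n+1) ω := by
          rw [Finset.sum_Icc_succ_top (by omega : (1:ℕ) ≤ n + 1), Finset.smul_sum]
          congr 1
          · refine Finset.sum_congr rfl fun k hk => ?_
            have hk' : k ≤ n := (Finset.mem_Icc.mp hk).2
            have he : n + 1 - k = (n - k) + 1 := by omega
            rw [he, pow_succ, smul_smul]
            congr 1
            ring
          · simp
        rw [hsum]
        simp only [smul_neg]
        abel
    -- end hmt
  intro t ht
  have hmI : Integrable (m t) P := by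
    rw [hmt t ht]
    exact (integrable_finset_sum (Finset.Icc 1 t) (f := fun k ω => (μ ^ (t - k) * η k) • g k ω) fun k _ => (hgInt k).fun_smul _).fun_neg
  have hdiff : ∀ ω, x (t+1) ω - x t ω
      = (-(lam * η t)) • g t ω + (1 - (1 - μ) * lam) • m t ω := by
    intro ω
    rw [hx t ht]
    simp only [neg_smul]
    abel
  have hInt : Integrable (fun ω => x (t+1) ω - x t ω) P := by
    have he : (fun ω => x (t+1) ω - x t ω)
        = fun ω => (-(lam * η t)) • g t ω + (1 - (1 - μ) * lam) • m t ω := funext hdiff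
    rw [he]
    exact ((hgInt t).fun_smul _).fun_add (hmI.fun_smul _)
  have hcnn : ∀ k, 0 ≤ μ ^ (t - k) * η k := fun k =>
    mul_nonneg (pow_nonneg hμ0.le _) (hη k).le
  calc ∫ ω, ‖x (t + 1) ω - x t ω‖ ∂P
      ≤ ∫ ω, (lam * η t * ‖g t ω‖
          + (1 - (1 - μ) * lam) * ∑ k ∈ Finset.Icc 1 t, (μ ^ (t - k) * η k) * ‖g k ω‖) ∂P := by
        apply integral_mono hInt.norm
        · exact ((hgInt t).norm.const_mul _).add
            ((integrable_finset_sum _ fun k _ => (hgInt k).norm.const_mul _).const_mul _)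
        · intro ω
          dsimp only
          rw [hdiff ω]
          refine le_trans (norm_add_le _ _) (add_le_add ?_ ?_)
          · rw [norm_smul, Real.norm_eq_abs, abs_neg,
              abs_of_nonneg (mul_nonneg hlam0 (hη t).le)]
          · rw [norm_smul, Real.norm_eq_abs, abs_of_nonneg hc0]
            refine mul_le_mul_of_nonneg_left ?_ hc0
            rw [hmt t ht]
            rw [norm_neg]
            refine le_trans (norm_sum_le _ _) (le_of_eq ?_)
            refine Finset.sum_congr rfl fun k _ => ?_
            rw [norm_smul, Real.norm_eq_abs, abs_of_nonneg (hcnn k)]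
    _ = lam * η t * ∫ ω, ‖g t ω‖ ∂P
          + (1 - (1 - μ) * lam) * ∑ k ∈ Finset.Icc 1 t, (μ ^ (t - k) * η k) * ∫ ω, ‖g k ω‖ ∂P := by
        rw [integral_add (((hgInt t).norm.const_mul _))
            ((integrable_finset_sum _ fun k _ => (hgInt k).norm.const_mul _).const_mul _),
          integral_const_mul, integral_const_mul,
          integral_finset_sum _ fun k _ => (hgInt k).norm.const_mul _]
        simp_rw [integral_const_mul]
    _ ≤ lam * η t * G + 1 * ∑ k ∈ Finset.Icc 1 t, (μ ^ (t - k) * η k) * G := by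
        refine add_le_add ?_ ?_
        · exact mul_le_mul_of_nonneg_left (hg1 t) (mul_nonneg hlam0 (hη t).le)
        · refine mul_le_mul hc1 ?_ ?_ zero_le_one
          · exact Finset.sum_le_sum fun k _ =>
              mul_le_mul_of_nonneg_left (hg1 k) (hcnn k)
          · exact Finset.sum_nonneg fun k _ =>
              mul_nonneg (hcnn k) (integral_nonneg fun ω => norm_nonneg _)
    _ ≤ G / (1 - μ) * (η t + (1 - μ) * ∑ k ∈ Finset.Icc 1 t, μ ^ (t - k) * η k) := by
        have h2 : G / (1 - μ) * (η t + (1 - μ) * ∑ k ∈ Finset.Icc 1 t, μ ^ (t - k) * η k)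
            = G / (1 - μ) * η t + G * ∑ k ∈ Finset.Icc 1 t, μ ^ (t - k) * η k := by
          field_simp
        rw [h2]
        refine add_le_add ?_ ?_
        · rw [div_mul_eq_mul_div, le_div_iff₀ h1μ]
          nlinarith [mul_nonneg hc0 (mul_nonneg hG (hη t).le)]
        · rw [one_mul, Finset.mul_sum]
          exact Finset.sum_le_sum fun k _ => le_of_eq (mul_comm _ _)
end

section
/- Under the hypotheses of the last-iterate convergence theorem for SUM (f differentiable, bounded below by f*, with L-Lipschitz gradient; unbiased stochastic gradients with E‖g_t‖² ≤ G²; step sizes with ∑ η_t = ∞, ∑ η_t² < ∞, η_{t−1}/η_t → 1; μ ∈ (0,1), λ ∈ [0, 1/(1−μ)]), the series of weighted expected squared gradient norms converges: ∑_{t=1}^∞ η_t E‖∇f(x_t)‖² < ∞, and consequently ∑_{t=1}^∞ η_t (E‖∇f(x_t)‖)² < ∞. -/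
open Finset MeasureTheory Filter Topology

section Helpers

lemma descent_lemma {E : Type*} [NormedAddCommGroup E] [InnerProductSpace ℝ E] [CompleteSpace E]
    (f : E → ℝ) (f' : E → E) (hf : ∀ y, HasGradientAt f (f' y) y)
    (L : ℝ) (hLip : ∀ y z, ‖f' y - f' z‖ ≤ L * ‖y - z‖)
    (a b : E) : f b ≤ f a + inner ℝ (f' a) (b - a) + L / 2 * ‖b - a‖ ^ 2 := by
  set γ : ℝ → E := fun s => a + s • (b - a) with hγ
  set φ : ℝ → ℝ := fun s =>
    f (γ s) - s * (inner ℝ (f' a) (b - a) : ℝ) - L * s ^ 2 / 2 * ‖b - a‖ ^ 2 with hφ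
  have hder : ∀ s : ℝ, HasDerivAt φ
      ((inner ℝ (f' (γ s)) (b - a) : ℝ) - (inner ℝ (f' a) (b - a) : ℝ)
        - L * s * ‖b - a‖ ^ 2) s := by
    intro s
    have hγd : HasDerivAt γ (b - a) s := by
      convert ((hasDerivAt_id s).smul_const (b - a)).const_add a using 1 <;> simp [hγ]
    have hfd : HasDerivAt (fun u : ℝ => f (γ u)) ((inner ℝ (f' (γ s)) (b - a) : ℝ)) s := by
      have h1 := (hasGradientAt_iff_hasFDerivAt.mp (hf (γ s)))
      have h2 := h1.comp_hasDerivAt s hγd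
      simp at h2
      exact h2
    have h2 : HasDerivAt (fun s : ℝ => s * (inner ℝ (f' a) (b - a) : ℝ))
        ((inner ℝ (f' a) (b - a) : ℝ)) s := by
      simpa using (hasDerivAt_id s).mul_const ((inner ℝ (f' a) (b - a) : ℝ))
    have h3 : HasDerivAt (fun s : ℝ => L * s ^ 2 / 2 * ‖b - a‖ ^ 2)
        (L * s * ‖b - a‖ ^ 2) s := by
      have := (((hasDerivAt_pow 2 s).const_mul L).div_const 2).mul_const (‖b - a‖ ^ 2)
      refine this.congr_deriv ?_
      norm_num only
      ring
    exact (hfd.sub h2).sub h3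
  have hmono : AntitoneOn φ (Set.Icc (0 : ℝ) 1) := by
    apply antitoneOn_of_deriv_nonpos (convex_Icc 0 1)
    · exact Continuous.continuousOn (by
        have : Differentiable ℝ φ := fun s => (hder s).differentiableAt
        exact this.continuous)
    · intro s hs
      exact ((hder s).differentiableAt).differentiableWithinAt
    · intro s hs
      rw [interior_Icc] at hs
      rw [(hder s).deriv]
      have h1 : (inner ℝ (f' (γ s) - f' a) (b - a) : ℝ) ≤ ‖f' (γ s) - f' a‖ * ‖b - a‖ :=
        real_inner_le_norm _ _
      have h2 : ‖f' (γ s) - f' a‖ ≤ L * (s * ‖b - a‖) := by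
        have := hLip (γ s) a
        simpa [hγ, norm_smul, abs_of_nonneg hs.1.le, mul_assoc] using this
      have h3 : (inner ℝ (f' (γ s) - f' a) (b - a) : ℝ)
          = (inner ℝ (f' (γ s)) (b - a) : ℝ) - (inner ℝ (f' a) (b - a) : ℝ) := by
        rw [inner_sub_left]
      nlinarith [norm_nonneg (b - a), sq_nonneg (‖b - a‖)]
  have h01 := hmono (Set.mem_Icc.mpr ⟨le_refl 0, zero_le_one⟩)
      (Set.mem_Icc.mpr ⟨zero_le_one, le_refl 1⟩) zero_le_one
  have hγ0 : γ 0 = a := by simp [hγ]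
  have hγ1 : γ 1 = b := by simp [hγ]
  simp only [hφ, hγ0, hγ1, one_pow, mul_one, one_mul, zero_pow, mul_zero, zero_mul,
    sub_zero] at h01
  linarith

lemma integrable_inner_L2 {α E : Type*} [MeasurableSpace α] {μ : Measure α}
    [NormedAddCommGroup E] [InnerProductSpace ℝ E] {f h : α → E}
    (hf : MemLp f 2 μ) (hh : MemLp h 2 μ) :
    Integrable (fun ω => (inner ℝ (f ω) (h ω) : ℝ)) μ := by
  have := L2.integrable_inner (𝕜 := ℝ) (hf.toLp f) (hh.toLp h)
  refine this.congr ?_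
  filter_upwards [hf.coeFn_toLp, hh.coeFn_toLp] with ω h1 h2
  rw [h1, h2]

lemma condexp_coord {Ω : Type*} {m' : MeasurableSpace Ω} [m0 : MeasurableSpace Ω]
    (P : Measure Ω) [IsProbabilityMeasure P] (hm' : m' ≤ m0) {d : ℕ}
    {G : Ω → EuclideanSpace ℝ (Fin d)} (hG : Integrable G P) (i : Fin d) :
    (fun ω => (P[G|m']) ω i) =ᵐ[P] P[fun ω => G ω i | m'] := by
  haveI : SigmaFinite (P.trim hm') := by
    haveI := isFiniteMeasure_trim (μ := P) hm'
    infer_instance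
  refine ae_eq_condExp_of_forall_setIntegral_eq hm' ?_ ?_ ?_ ?_
  · exact (EuclideanSpace.proj (𝕜 := ℝ) i).integrable_comp hG
  · intro s _ _
    exact (((EuclideanSpace.proj (𝕜 := ℝ) i).integrable_comp integrable_condExp)).integrableOn
  · intro s hs hμs
    have h1 : ∫ ω in s, (P[G|m']) ω i ∂P
        = (EuclideanSpace.proj (𝕜 := ℝ) i) (∫ ω in s, (P[G|m']) ω ∂P) := by
      rw [← ContinuousLinearMap.integral_comp_comm _ integrable_condExp.integrableOn]
      simp
    have h2 : ∫ ω in s, G ω i ∂P = (EuclideanSpace.proj (𝕜 := ℝ) i) (∫ ω in s, G ω ∂P) := by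
      rw [← ContinuousLinearMap.integral_comp_comm _ hG.integrableOn]
      simp
    rw [h1, h2, setIntegral_condExp hm' hG hs]
  · exact ((EuclideanSpace.proj (𝕜 := ℝ) i).continuous.comp_stronglyMeasurable
      stronglyMeasurable_condExp).aestronglyMeasurable

lemma integral_inner_condexp {Ω : Type*} {m' : MeasurableSpace Ω} [m0 : MeasurableSpace Ω]
    (P : Measure Ω) [IsProbabilityMeasure P] (hm' : m' ≤ m0) {d : ℕ}
    {h G K : Ω → EuclideanSpace ℝ (Fin d)}
    (hh2 : MemLp h 2 P) (hhm : StronglyMeasurable[m'] h)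
    (hG2 : MemLp G 2 P) (hK2 : MemLp K 2 P)
    (hcond : P[G|m'] =ᵐ[P] K) :
    ∫ ω, (inner ℝ (h ω) (G ω) : ℝ) ∂P = ∫ ω, (inner ℝ (h ω) (K ω) : ℝ) ∂P := by
  haveI : SigmaFinite (P.trim hm') := by
    haveI := isFiniteMeasure_trim (μ := P) hm'
    infer_instance
  have hcoordh : ∀ i : Fin d, MemLp (fun ω => h ω i) 2 P := fun i => by
    have := (EuclideanSpace.proj i : EuclideanSpace ℝ (Fin d) →L[ℝ] ℝ).comp_memLp' hh2
    simpa [Function.comp_def] using this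
  have hcoordG : ∀ i : Fin d, MemLp (fun ω => G ω i) 2 P := fun i => by
    have := (EuclideanSpace.proj i : EuclideanSpace ℝ (Fin d) →L[ℝ] ℝ).comp_memLp' hG2
    simpa [Function.comp_def] using this
  have hcoordK : ∀ i : Fin d, MemLp (fun ω => K ω i) 2 P := fun i => by
    have := (EuclideanSpace.proj i : EuclideanSpace ℝ (Fin d) →L[ℝ] ℝ).comp_memLp' hK2
    simpa [Function.comp_def] using this
  have hinner : ∀ (u v : EuclideanSpace ℝ (Fin d)),
      (inner ℝ u v : ℝ) = ∑ i : Fin d, u i * v i := by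
    intro u v
    simp [PiLp.inner_apply, RCLike.inner_apply, mul_comm]
  have hintG : ∀ i, Integrable (fun ω => h ω i * G ω i) P := fun i => by
    have := integrable_inner_L2 (hcoordh i) (hcoordG i)
    simpa [RCLike.inner_apply, mul_comm] using this
  have hintK : ∀ i, Integrable (fun ω => h ω i * K ω i) P := fun i => by
    have := integrable_inner_L2 (hcoordh i) (hcoordK i)
    simpa [RCLike.inner_apply, mul_comm] using this
  have key : ∀ i : Fin d, ∫ ω, h ω i * G ω i ∂P = ∫ ω, h ω i * K ω i ∂P := by
    intro i
    have h1 : ∫ ω, h ω i * G ω i ∂P = ∫ ω, (P[fun ω => h ω i * G ω i|m']) ω ∂P :=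
      (integral_condExp hm' (f := fun ω => h ω i * G ω i)).symm
    have hmi : StronglyMeasurable[m'] (fun ω => h ω i) :=
      ((EuclideanSpace.proj i : EuclideanSpace ℝ (Fin d) →L[ℝ] ℝ).continuous.comp_stronglyMeasurable
        hhm : StronglyMeasurable[m'] fun ω =>
          (EuclideanSpace.proj i : EuclideanSpace ℝ (Fin d) →L[ℝ] ℝ) (h ω))
    have h2 : P[(fun ω => h ω i) * (fun ω => G ω i)|m']
        =ᵐ[P] (fun ω => h ω i) * P[fun ω => G ω i|m'] :=
      condExp_mul_of_stronglyMeasurable_left hmi (by exact hintG i)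
        ((memLp_one_iff_integrable).mp ((hcoordG i).mono_exponent (by norm_num)))
    have h3 : P[fun ω => G ω i|m'] =ᵐ[P] fun ω => K ω i := by
      have := (condexp_coord P hm'
        ((memLp_one_iff_integrable).mp (hG2.mono_exponent (by norm_num))) i).symm
      refine this.trans ?_
      filter_upwards [hcond] with ω hω
      rw [hω]
    rw [h1]
    have h4 : (P[fun ω => h ω i * G ω i|m']) =ᵐ[P] fun ω => h ω i * K ω i := by
      have h2' : P[fun ω => h ω i * G ω i|m']
          =ᵐ[P] fun ω => h ω i * (P[fun ω => G ω i|m']) ω := by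
        exact h2
      refine h2'.trans ?_
      filter_upwards [h3] with ω hω
      rw [hω]
    rw [integral_congr_ae h4]
  calc ∫ ω, (inner ℝ (h ω) (G ω) : ℝ) ∂P
      = ∫ ω, ∑ i : Fin d, h ω i * G ω i ∂P := by simp_rw [hinner]
    _ = ∑ i : Fin d, ∫ ω, h ω i * G ω i ∂P :=
        integral_finset_sum _ (fun i _ => hintG i)
    _ = ∑ i : Fin d, ∫ ω, h ω i * K ω i ∂P := by simp_rw [key]
    _ = ∫ ω, ∑ i : Fin d, h ω i * K ω i ∂P :=
        (integral_finset_sum _ (fun i _ => hintK i)).symm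
    _ = ∫ ω, (inner ℝ (h ω) (K ω) : ℝ) ∂P := by simp_rw [hinner]

lemma summable_of_Ico_bound {b : ℕ → ℝ} {B : ℝ} (hb : ∀ t, 0 ≤ b t)
    (hB : ∀ N, ∑ t ∈ Finset.Ico 1 N, b t ≤ B) : Summable b := by
  have hB0 : 0 ≤ B := by simpa using hB 1
  apply summable_of_sum_range_le (c := b 0 + B) hb
  intro n
  cases n with
  | zero => simp; linarith [hb 0]
  | succ k =>
      rw [Finset.range_eq_Ico, Finset.sum_eq_sum_Ico_succ_bot (by omega)]
      linarith [hB (k + 1)]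

end Helpers

set_option maxHeartbeats 1000000 in
/-- Inequalities (50)–(51): under the hypotheses of the last-iterate convergence theorem,
`∑_t η_t E‖∇f(x_t)‖² < ∞` and consequently `∑_t η_t (E‖∇f(x_t)‖)² < ∞`. -/
theorem ineq_50_51 (d : ℕ) (hd : 0 < d)
    {Ω : Type} [MeasurableSpace Ω] (P : Measure Ω) [IsProbabilityMeasure P]
    (μ lam G L : ℝ) (hμ : μ ∈ Set.Ioo (0 : ℝ) 1)
    (hlam : lam ∈ Set.Icc (0 : ℝ) (1 / (1 - μ)))
    (η : ℕ → ℝ) (hη : ∀ t, 0 < η t)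
    (hdiv : ¬ Summable η) (hsq : Summable (fun t => η t ^ 2))
    (hratio : Tendsto (fun t => η t / η (t + 1)) atTop (𝓝 1))
    (g : ℕ → Ω → EuclideanSpace ℝ (Fin d))
    (hgmeas : ∀ t, Measurable (g t))
    (hgL2 : ∀ t, MemLp (g t) 2 P)
    (hg2 : ∀ t, ∫ ω, ‖g t ω‖ ^ 2 ∂P ≤ G ^ 2)
    (f : EuclideanSpace ℝ (Fin d) → ℝ) (f' : EuclideanSpace ℝ (Fin d) → EuclideanSpace ℝ (Fin d))
    (hf : ∀ y, HasGradientAt f (f' y) y)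
    (fstar : ℝ) (hbdd : ∀ y, fstar ≤ f y)
    (hLip : ∀ y z, ‖f' y - f' z‖ ≤ L * ‖y - z‖)
    (m x : ℕ → Ω → EuclideanSpace ℝ (Fin d))
    (x1 : EuclideanSpace ℝ (Fin d)) (hx1 : x 1 = fun _ => x1)
    (hm0 : m 0 = fun _ => 0)
    (hm : ∀ t, 1 ≤ t → m t = fun ω => μ • m (t - 1) ω - η t • g t ω)
    (hx : ∀ t, 1 ≤ t →
      x (t + 1) = fun ω => x t ω - (lam * η t) • g t ω + (1 - (1 - μ) * lam) • m t ω)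
    (hunbias : ∀ t, 1 ≤ t →
      P[g t | sigmaGen g (t - 1)] =ᵐ[P] fun ω => f' (x t ω)) :
    Summable (fun t => η t * ∫ ω, ‖f' (x t ω)‖ ^ 2 ∂P) ∧
      Summable (fun t => η t * (∫ ω, ‖f' (x t ω)‖ ∂P) ^ 2) := by
  obtain ⟨hμ0, hμ1⟩ := hμ
  obtain ⟨hlam0, hlam1⟩ := hlam
  have h1μ : (0:ℝ) < 1 - μ := by linarith
  have hL0 : 0 ≤ L := by
    set y0 : EuclideanSpace ℝ (Fin d) := EuclideanSpace.single ⟨0, hd⟩ (1:ℝ) with hy0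
    have h := hLip y0 (0 : EuclideanSpace ℝ (Fin d))
    have hn : ‖y0 - (0 : EuclideanSpace ℝ (Fin d))‖ = 1 := by
      simp [hy0, EuclideanSpace.norm_single]
    rw [hn, mul_one] at h
    exact le_trans (norm_nonneg _) h
  have hG2nn : (0:ℝ) ≤ G ^ 2 :=
    le_trans (integral_nonneg (fun ω => sq_nonneg _)) (hg2 1)
  set b : ℝ := 1 - (1 - μ) * lam with hbdef
  have hb0 : 0 ≤ b := by
    have h2 : (1 - μ) * lam ≤ (1 - μ) * (1 / (1 - μ)) :=
      mul_le_mul_of_nonneg_left hlam1 h1μ.le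
    have h3 : (1 - μ) * (1 / (1 - μ)) = 1 := by field_simp
    simp only [hbdef]; linarith
  set a : ℝ := μ * b / (1 - μ) with hadef
  have ha0 : 0 ≤ a := by positivity
  set Z : ℕ → Ω → EuclideanSpace ℝ (Fin d) := fun t ω => x t ω + a • m (t-1) ω with hZdef
  -- continuity of f and f'
  have hf'c : Continuous f' := by
    have hlw : LipschitzWith (Real.toNNReal L) f' := by
      apply LipschitzWith.of_dist_le_mul
      intro y z
      rw [dist_eq_norm, dist_eq_norm]
      refine (hLip y z).trans ?_
      exact mul_le_mul_of_nonneg_right (Real.le_coe_toNNReal L) (norm_nonneg _)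
    exact hlw.continuous
  have hfc : Continuous f := by
    rw [continuous_iff_continuousAt]
    exact fun y => (hasGradientAt_iff_hasFDerivAt.mp (hf y)).continuousAt
  -- closed form for m
  have hmc : ∀ t, m t = fun ω => -(∑ k ∈ Icc 1 t, (μ ^ (t - k) * η k) • g k ω) := by
    intro t
    induction t with
    | zero => simpa using hm0
    | succ n ih =>
      rw [hm (n+1) (by omega)]
      funext ω
      simp only [Nat.add_sub_cancel]
      rw [congrFun ih ω, Finset.sum_Icc_succ_top (by omega : 1 ≤ n + 1)]
      have hcongr : ∑ k ∈ Icc 1 n, (μ ^ (n + 1 - k) * η k) • g k ω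
          = μ • ∑ k ∈ Icc 1 n, (μ ^ (n - k) * η k) • g k ω := by
        rw [Finset.smul_sum]
        refine Finset.sum_congr rfl fun k hk => ?_
        obtain ⟨hk1, hk2⟩ := Finset.mem_Icc.mp hk
        have hnk : n + 1 - k = (n - k) + 1 := by omega
        rw [hnk, smul_smul]
        congr 1
        rw [pow_succ]
        ring
      rw [hcongr]
      simp only [Nat.add_sub_cancel, Nat.sub_self, pow_zero, one_mul, smul_neg]
      abel
  -- recursion for Z
  have hZrec : ∀ t, 1 ≤ t → ∀ ω, Z (t+1) ω = Z t ω - (η t / (1 - μ)) • g t ω := by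
    intro t ht ω
    have hxt := congrFun (hx t ht) ω
    have hmt := congrFun (hm t ht) ω
    have h1ne : (1:ℝ) - μ ≠ 0 := ne_of_gt h1μ
    simp only [hZdef, Nat.add_sub_cancel]
    rw [hxt, hmt]
    rw [hadef, hbdef]
    match_scalars <;> (field_simp; try ring)
  -- closed form for Z
  have hZ1 : ∀ ω, Z 1 ω = x1 := by
    intro ω
    simp only [hZdef, Nat.sub_self, congrFun hx1 ω, congrFun hm0 ω, smul_zero, add_zero]
  have hZc : ∀ t, 1 ≤ t → ∀ ω,
      Z t ω = x1 - (1/(1-μ)) • ∑ k ∈ Icc 1 (t-1), η k • g k ω := by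
    intro t
    induction t with
    | zero => omega
    | succ n ih =>
      intro _ ω
      rcases Nat.eq_zero_or_pos n with hn | hn
      · subst hn
        simp [hZ1 ω]
      · rw [hZrec n hn ω, ih hn ω]
        simp only [Nat.add_sub_cancel]
        have hsum : ∑ k ∈ Icc 1 n, η k • g k ω
            = ∑ k ∈ Icc 1 (n-1), η k • g k ω + η n • g n ω := by
          have h2 : n = (n - 1) + 1 := by omega
          rw [h2, Finset.sum_Icc_succ_top (by omega : 1 ≤ n - 1 + 1)]
          rw [← h2]
        rw [hsum]
        match_scalars <;> (try ring) <;> (field_simp; try ring)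
  -- σ-algebra facts
  have hm'le : ∀ t, sigmaGen g t ≤ (inferInstance : MeasurableSpace Ω) := by
    intro t
    refine iSup₂_le fun k _ => ?_
    exact measurable_iff_comap_le.mp (hgmeas k)
  have hgm' : ∀ k t, 1 ≤ k → k ≤ t → Measurable[sigmaGen g t] (g k) := by
    intro k t h1 h2
    rw [measurable_iff_comap_le]
    exact le_iSup₂ (f := fun (k : ℕ) (_ : k ∈ Set.Icc 1 t) =>
      MeasurableSpace.comap (g k) inferInstance) k ⟨h1, h2⟩
  have hmono : ∀ {s t : ℕ}, s ≤ t → sigmaGen g s ≤ sigmaGen g t := by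
    intro s t hst
    refine iSup₂_le fun k hk => ?_
    exact le_iSup₂ (f := fun (k : ℕ) (_ : k ∈ Set.Icc 1 t) =>
      MeasurableSpace.comap (g k) inferInstance) k ⟨hk.1, hk.2.trans hst⟩
  have hmm' : ∀ t, Measurable[sigmaGen g t] (m t) := by
    intro t
    rw [hmc t]
    apply Measurable.neg
    apply Finset.measurable_sum
    intro k hk
    obtain ⟨hk1, hk2⟩ := Finset.mem_Icc.mp hk
    exact (hgm' k t hk1 hk2).const_smul (μ ^ (t - k) * η k)
  have hxm' : ∀ t, 1 ≤ t → Measurable[sigmaGen g (t-1)] (x t) := by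
    intro t
    induction t with
    | zero => omega
    | succ n ih =>
      intro _
      rcases Nat.eq_zero_or_pos n with hn | hn
      · subst hn
        rw [hx1]
        exact measurable_const
      · rw [hx n hn]
        rw [Nat.add_sub_cancel]
        have h1 : Measurable[sigmaGen g n] (x n) :=
          (ih hn).mono (hmono (by omega)) le_rfl
        exact ((h1.sub ((hgm' n n hn le_rfl).const_smul (lam * η n))).add ((hmm' n).const_smul b))
  have hZm' : ∀ t, 1 ≤ t → Measurable[sigmaGen g (t-1)] (Z t) := by
    intro t ht
    exact (hxm' t ht).add ((hmm' (t-1)).const_smul a)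
  -- L² facts
  have hmL2 : ∀ t, MemLp (m t) 2 P := by
    intro t
    rw [hmc t]
    have hsum : MemLp (fun ω => ∑ k ∈ Icc 1 t, (μ ^ (t - k) * η k) • g k ω) 2 P := by
      refine memLp_finset_sum (s := Icc 1 t)
        (f := fun k ω => (μ ^ (t - k) * η k) • g k ω) (fun k _ => ?_)
      exact ((hgL2 k).const_smul (μ ^ (t - k) * η k : ℝ) :
        MemLp (fun ω => (μ ^ (t - k) * η k) • g k ω) 2 P)
    exact hsum.neg
  have hxL2 : ∀ t, 1 ≤ t → MemLp (x t) 2 P := by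
    intro t
    induction t with
    | zero => omega
    | succ n ih =>
      intro _
      rcases Nat.eq_zero_or_pos n with hn | hn
      · subst hn
        rw [hx1]
        exact memLp_const _
      · rw [hx n hn]
        have h1 : MemLp (fun ω => (lam * η n) • g n ω) 2 P := (hgL2 n).const_smul (lam * η n)
        have h2 : MemLp (fun ω => b • m n ω) 2 P := (hmL2 n).const_smul b
        exact (((ih hn).sub h1).add h2)
  have hZL2 : ∀ t, 1 ≤ t → MemLp (Z t) 2 P := by
    intro t ht
    have h2 : MemLp (fun ω => a • m (t-1) ω) 2 P := (hmL2 (t-1)).const_smul a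
    exact (hxL2 t ht).add h2
  -- f' composition is L²
  have hf'norm : ∀ y, ‖f' y‖ ≤ ‖f' 0‖ + L * ‖y‖ := by
    intro y
    have h := hLip y 0
    have h2 := norm_sub_norm_le (f' y) (f' 0)
    simp only [sub_zero] at h
    linarith
  have hf'comp : ∀ (w : Ω → EuclideanSpace ℝ (Fin d)), MemLp w 2 P →
      MemLp (fun ω => f' (w ω)) 2 P := by
    intro w hw
    have hmeas : AEStronglyMeasurable (fun ω => f' (w ω)) P :=
      hf'c.comp_aestronglyMeasurable hw.1
    have hbound : MemLp (fun ω => ‖f' 0‖ + L * ‖w ω‖) 2 P :=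
      (memLp_const ‖f' 0‖).add (hw.norm.const_mul L)
    refine hbound.of_le hmeas ?_
    filter_upwards with ω
    have h1 := hf'norm (w ω)
    have h2 : ‖f' 0‖ + L * ‖w ω‖ ≤ ‖‖f' 0‖ + L * ‖w ω‖‖ := le_abs_self _
    linarith
  -- integrability of f ∘ Z t
  have hfZint : ∀ t, 1 ≤ t → Integrable (fun ω => f (Z t ω)) P := by
    intro t ht
    have hZt := hZL2 t ht
    have hub : ∀ ω, f (Z t ω) ≤ f x1 + ‖f' x1‖ * ‖Z t ω - x1‖ + L/2 * ‖Z t ω - x1‖^2 := by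
      intro ω
      have hdes := descent_lemma f f' hf L hLip x1 (Z t ω)
      have h2 := real_inner_le_norm (f' x1) (Z t ω - x1)
      linarith
    have h1 : MemLp (fun ω => Z t ω - x1) 2 P := hZt.sub (memLp_const _)
    have h2 : Integrable (fun ω => ‖Z t ω - x1‖) P := h1.norm.integrable (by norm_num)
    have h3 : Integrable (fun ω => ‖Z t ω - x1‖^2) P :=
      (memLp_two_iff_integrable_sq_norm h1.1).mp h1
    have hBint : Integrable (fun ω =>
        |fstar| + (f x1 + ‖f' x1‖ * ‖Z t ω - x1‖ + L/2 * ‖Z t ω - x1‖^2 - fstar)) P := by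
      refine (integrable_const _).add ?_
      refine Integrable.sub ?_ (integrable_const _)
      exact ((integrable_const (f x1)).add (h2.const_mul _)).add (h3.const_mul _)
    refine hBint.mono' (hfc.comp_aestronglyMeasurable hZt.1) ?_
    filter_upwards with ω
    have h4 := hbdd (Z t ω)
    have h5 := hub ω
    rw [Real.norm_eq_abs, abs_le]
    constructor
    · have h6 : |fstar| + (f x1 + ‖f' x1‖ * ‖Z t ω - x1‖ + L/2 * ‖Z t ω - x1‖^2 - fstar)
          ≤ |(|fstar| + (f x1 + ‖f' x1‖ * ‖Z t ω - x1‖ + L/2 * ‖Z t ω - x1‖^2 - fstar))| :=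
        le_abs_self _
      have h7 := neg_abs_le fstar
      linarith [le_abs_self fstar]
    · have h7 := le_abs_self fstar
      linarith [le_abs_self (|fstar| + (f x1 + ‖f' x1‖ * ‖Z t ω - x1‖
        + L/2 * ‖Z t ω - x1‖^2 - fstar))]
  -- second moment bound for m
  have hgeom : ∀ N : ℕ, ∑ j ∈ Finset.range N, μ^j ≤ 1/(1-μ) := by
    intro N
    rw [le_div_iff₀ h1μ]
    have h := geom_sum_mul μ N
    have hp : 0 ≤ μ ^ N := pow_nonneg hμ0.le N
    nlinarith
  have hgk2 : ∀ k, Integrable (fun ω => ‖g k ω‖^2) P := fun k =>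
    (memLp_two_iff_integrable_sq_norm (hgL2 k).1).mp (hgL2 k)
  have hgk2nn : ∀ k, (0:ℝ) ≤ ∫ ω, ‖g k ω‖^2 ∂P := fun k =>
    integral_nonneg fun ω => sq_nonneg _
  have hm2int : ∀ s, Integrable (fun ω => ‖m s ω‖^2) P := fun s =>
    (memLp_two_iff_integrable_sq_norm (hmL2 s).1).mp (hmL2 s)
  have hMbound : ∀ s : ℕ, ∫ ω, ‖m s ω‖^2 ∂P
      ≤ (1/(1-μ)) * ∑ k ∈ Icc 1 s, μ^(s-k) * η k^2 * G^2 := by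
    intro s
    have hpt : ∀ ω, ‖m s ω‖^2
        ≤ (1/(1-μ)) * ∑ k ∈ Icc 1 s, μ^(s-k) * η k^2 * ‖g k ω‖^2 := by
      intro ω
      rw [congrFun (hmc s) ω, norm_neg]
      have h1 : ‖∑ k ∈ Icc 1 s, (μ^(s-k) * η k) • g k ω‖
          ≤ ∑ k ∈ Icc 1 s, μ^(s-k) * η k * ‖g k ω‖ := by
        refine (norm_sum_le _ _).trans ?_
        refine Finset.sum_le_sum fun k _ => ?_
        rw [norm_smul, Real.norm_eq_abs, abs_of_nonneg (mul_nonneg (pow_nonneg hμ0.le _) (hη k).le)]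
      have h2 : (∑ k ∈ Icc 1 s, μ^(s-k) * η k * ‖g k ω‖)^2
          ≤ (∑ k ∈ Icc 1 s, μ^(s-k)) * ∑ k ∈ Icc 1 s, μ^(s-k) * η k^2 * ‖g k ω‖^2 :=
        Finset.sum_sq_le_sum_mul_sum_of_sq_eq_mul _ (fun k _ => by positivity)
          (fun k _ => by positivity) (fun k _ => by ring)
      have h3 : ∑ k ∈ Icc 1 s, μ^(s-k) ≤ 1/(1-μ) := by
        have hre : ∑ k ∈ Icc 1 s, μ^(s-k) = ∑ j ∈ Finset.range s, μ^j := by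
          rw [show Icc 1 s = Ico 1 (s+1) by rw [Finset.Ico_add_one_right_eq_Icc],
            Finset.sum_Ico_eq_sum_range]
          simp only [Nat.add_sub_cancel]
          rw [← Finset.sum_range_reflect]
          refine Finset.sum_congr rfl fun i hi => ?_
          have hi' := Finset.mem_range.mp hi
          congr 1
          omega
        rw [hre]
        exact hgeom s
      have h4 : ‖∑ k ∈ Icc 1 s, (μ^(s-k) * η k) • g k ω‖^2
          ≤ (∑ k ∈ Icc 1 s, μ^(s-k) * η k * ‖g k ω‖)^2 :=
        pow_le_pow_left₀ (norm_nonneg _) h1 2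
      have h5 : 0 ≤ ∑ k ∈ Icc 1 s, μ^(s-k) * η k^2 * ‖g k ω‖^2 :=
        Finset.sum_nonneg fun k _ => by positivity
      calc ‖∑ k ∈ Icc 1 s, (μ^(s-k) * η k) • g k ω‖^2
          ≤ (∑ k ∈ Icc 1 s, μ^(s-k)) * ∑ k ∈ Icc 1 s, μ^(s-k) * η k^2 * ‖g k ω‖^2 :=
            h4.trans h2
        _ ≤ (1/(1-μ)) * ∑ k ∈ Icc 1 s, μ^(s-k) * η k^2 * ‖g k ω‖^2 :=
            mul_le_mul_of_nonneg_right h3 h5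
    have hint2 : Integrable (fun ω =>
        (1/(1-μ)) * ∑ k ∈ Icc 1 s, μ^(s-k) * η k^2 * ‖g k ω‖^2) P := by
      refine Integrable.const_mul ?_ _
      exact integrable_finset_sum _ (fun k _ => (hgk2 k).const_mul _)
    have hmono2 := integral_mono (hm2int s) hint2 hpt
    refine hmono2.trans ?_
    rw [integral_const_mul, integral_finset_sum _ (fun k _ => (hgk2 k).const_mul _)]
    have h6 : ∀ k ∈ Icc 1 s, ∫ ω, μ^(s-k) * η k^2 * ‖g k ω‖^2 ∂P
        ≤ μ^(s-k) * η k^2 * G^2 := by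
      intro k _
      rw [integral_const_mul]
      exact mul_le_mul_of_nonneg_left (hg2 k) (by positivity)
    have h7 : 0 ≤ 1/(1-μ) := by positivity
    exact mul_le_mul_of_nonneg_left (Finset.sum_le_sum h6) h7
  -- key per-step inequality
  set I : ℕ → ℝ := fun t => ∫ ω, ‖f' (x t ω)‖ ^ 2 ∂P with hIdef
  set M : ℕ → ℝ := fun s => ∫ ω, ‖m s ω‖ ^ 2 ∂P with hMdef
  set F : ℕ → ℝ := fun t => ∫ ω, f (Z t ω) ∂P with hFdef
  have hInn : ∀ t, 0 ≤ I t := fun t => integral_nonneg fun ω => sq_nonneg _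
  have hMnn : ∀ s, 0 ≤ M s := fun s => integral_nonneg fun ω => sq_nonneg _
  have key : ∀ t, 1 ≤ t → η t * I t ≤ 2*(1-μ)*(F t - F (t+1))
      + (L/(1-μ)) * η t^2 * G^2 + a^2*L^2 * (η t * M (t-1)) := by
    intro t ht
    have hgt := hgL2 t
    have hf'xt := hf'comp _ (hxL2 t ht)
    have hf'Zt := hf'comp _ (hZL2 t ht)
    set c : ℝ := η t / (1 - μ) with hcdef
    have hc0 : 0 < c := div_pos (hη t) h1μ
    -- step 1 : expected descent
    have hi2 : Integrable (fun ω => (inner ℝ (f' (Z t ω)) (g t ω) : ℝ)) P :=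
      integrable_inner_L2 hf'Zt hgt
    have step1 : F (t+1) ≤ F t - c * ∫ ω, (inner ℝ (f' (Z t ω)) (g t ω) : ℝ) ∂P
        + L/2 * (c^2 * ∫ ω, ‖g t ω‖^2 ∂P) := by
      have hptw : ∀ ω, f (Z (t+1) ω) ≤ f (Z t ω) - c * (inner ℝ (f' (Z t ω)) (g t ω) : ℝ)
          + L/2 * (c^2 * ‖g t ω‖^2) := by
        intro ω
        have hdes := descent_lemma f f' hf L hLip (Z t ω) (Z (t+1) ω)
        have hsub : Z (t+1) ω - Z t ω = -(c • g t ω) := by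
          rw [hZrec t ht ω]
          abel
        rw [hsub] at hdes
        have he1 : (inner ℝ (f' (Z t ω)) (-(c • g t ω)) : ℝ)
            = -(c * (inner ℝ (f' (Z t ω)) (g t ω) : ℝ)) := by
          rw [inner_neg_right, real_inner_smul_right]
        have he2 : ‖-(c • g t ω)‖^2 = c^2 * ‖g t ω‖^2 := by
          rw [norm_neg, norm_smul, Real.norm_eq_abs, abs_of_pos hc0, mul_pow]
        rw [he1, he2] at hdes
        linarith
      have hi2' : Integrable (fun ω => c * (inner ℝ (f' (Z t ω)) (g t ω) : ℝ)) P :=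
        hi2.const_mul c
      have ha1 : Integrable (fun ω => f (Z t ω) - c * (inner ℝ (f' (Z t ω)) (g t ω) : ℝ)) P :=
        (hfZint t ht).sub hi2'
      have hb1 : Integrable (fun ω => L/2 * (c^2 * ‖g t ω‖^2)) P :=
        ((hgk2 t).const_mul _).const_mul _
      have hrhsint : Integrable (fun ω => f (Z t ω) - c * (inner ℝ (f' (Z t ω)) (g t ω) : ℝ)
          + L/2 * (c^2 * ‖g t ω‖^2)) P := ha1.add hb1
      have hint := integral_mono (hfZint (t+1) (by omega)) hrhsint hptw
      rw [integral_add ha1 hb1, integral_sub (hfZint t ht) hi2',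
        integral_const_mul, integral_const_mul, integral_const_mul] at hint
      exact hint
    -- step 2 : tower property
    have hSM : StronglyMeasurable[sigmaGen g (t-1)] (fun ω => f' (Z t ω)) :=
      hf'c.comp_stronglyMeasurable ((hZm' t ht).stronglyMeasurable)
    have step2 : ∫ ω, (inner ℝ (f' (Z t ω)) (g t ω) : ℝ) ∂P
        = ∫ ω, (inner ℝ (f' (Z t ω)) (f' (x t ω)) : ℝ) ∂P :=
      integral_inner_condexp P (hm'le (t-1)) hf'Zt hSM hgt hf'xt (hunbias t ht)
    -- step 3 : lower bound on the inner product
    have step3 : (1/2) * I t - a^2*L^2/2 * M (t-1)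
        ≤ ∫ ω, (inner ℝ (f' (Z t ω)) (f' (x t ω)) : ℝ) ∂P := by
      have hptw3 : ∀ ω, (1/2) * ‖f' (x t ω)‖^2 - a^2*L^2/2 * ‖m (t-1) ω‖^2
          ≤ (inner ℝ (f' (Z t ω)) (f' (x t ω)) : ℝ) := by
        intro ω
        have hZx : Z t ω - x t ω = a • m (t-1) ω := by
          simp only [hZdef]
          abel
        have hvu : ‖f' (Z t ω) - f' (x t ω)‖ ≤ L * (a * ‖m (t-1) ω‖) := by
          have h := hLip (Z t ω) (x t ω)
          rwa [hZx, norm_smul, Real.norm_eq_abs, abs_of_nonneg ha0] at h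
        have hvu2 : ‖f' (Z t ω) - f' (x t ω)‖^2 ≤ (L * (a * ‖m (t-1) ω‖))^2 :=
          pow_le_pow_left₀ (norm_nonneg _) hvu 2
        have h1 : (inner ℝ (f' (Z t ω)) (f' (x t ω)) : ℝ)
            = ‖f' (x t ω)‖^2 + (inner ℝ (f' (Z t ω) - f' (x t ω)) (f' (x t ω)) : ℝ) := by
          rw [inner_sub_left, real_inner_self_eq_norm_sq]
          ring
        have h2 : |(inner ℝ (f' (Z t ω) - f' (x t ω)) (f' (x t ω)) : ℝ)|
            ≤ ‖f' (Z t ω) - f' (x t ω)‖ * ‖f' (x t ω)‖ := abs_real_inner_le_norm _ _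
        have h4 : -(‖f' (Z t ω) - f' (x t ω)‖ * ‖f' (x t ω)‖)
            ≤ (inner ℝ (f' (Z t ω) - f' (x t ω)) (f' (x t ω)) : ℝ) := neg_le_of_abs_le h2
        nlinarith [sq_nonneg (‖f' (Z t ω) - f' (x t ω)‖ - ‖f' (x t ω)‖),
          norm_nonneg (f' (Z t ω) - f' (x t ω)), norm_nonneg (f' (x t ω))]
      have hc1 : Integrable (fun ω => (1/2) * ‖f' (x t ω)‖^2) P :=
        ((memLp_two_iff_integrable_sq_norm hf'xt.1).mp hf'xt).const_mul _
      have hc2 : Integrable (fun ω => a^2*L^2/2 * ‖m (t-1) ω‖^2) P :=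
        (hm2int (t-1)).const_mul _
      have hlhsint : Integrable (fun ω => (1/2) * ‖f' (x t ω)‖^2
          - a^2*L^2/2 * ‖m (t-1) ω‖^2) P := hc1.sub hc2
      have hint3 := integral_mono hlhsint (integrable_inner_L2 hf'Zt hf'xt) hptw3
      rw [integral_sub hc1 hc2, integral_const_mul, integral_const_mul] at hint3
      exact hint3
    -- combine
    have hKnn := hgk2nn t
    have hK := hg2 t
    have hceq : c * (1 - μ) = η t := by
      rw [hcdef]
      field_simp
    have hstep : F (t+1) ≤ F t - c * ((1/2) * I t - a^2*L^2/2 * M (t-1))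
        + L/2 * (c^2 * G^2) := by
      have h1 : c * ((1/2) * I t - a^2*L^2/2 * M (t-1))
          ≤ c * ∫ ω, (inner ℝ (f' (Z t ω)) (f' (x t ω)) : ℝ) ∂P :=
        mul_le_mul_of_nonneg_left step3 hc0.le
      have h2 : L/2 * (c^2 * ∫ ω, ‖g t ω‖^2 ∂P) ≤ L/2 * (c^2 * G^2) := by
        have := mul_le_mul_of_nonneg_left hK (sq_nonneg c)
        exact mul_le_mul_of_nonneg_left this (by positivity)
      rw [step2] at step1
      linarith
    -- multiply out
    have hfinal : η t * I t ≤ 2*(1-μ)*(F t - F (t+1))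
        + (L/(1-μ)) * η t^2 * G^2 + a^2*L^2 * (η t * M (t-1)) := by
      have he1 : 2*(1-μ)*(c * ((1/2) * I t - a^2*L^2/2 * M (t-1)))
          = η t * I t - a^2*L^2 * (η t * M (t-1)) := by
        have : c = η t / (1 - μ) := hcdef
        rw [this]
        field_simp
      have he2 : 2*(1-μ)*(L/2 * (c^2 * G^2)) = (L/(1-μ)) * η t^2 * G^2 := by
        rw [hcdef]
        field_simp
      have h3 : 2*(1-μ)*(c * ((1/2) * I t - a^2*L^2/2 * M (t-1)))
          ≤ 2*(1-μ)*(F t - F (t+1)) + 2*(1-μ)*(L/2 * (c^2 * G^2)) := by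
        have h4 : c * ((1/2) * I t - a^2*L^2/2 * M (t-1))
            ≤ (F t - F (t+1)) + L/2 * (c^2 * G^2) := by linarith
        nlinarith [h1μ]
      rw [he1, he2] at h3
      linarith
    exact hfinal
  -- step size bound
  obtain ⟨C, hC⟩ : ∃ C : ℝ, ∀ t, η t ≤ C := by
    have h1 : Tendsto (fun t => η t ^ 2) atTop (𝓝 0) := hsq.tendsto_atTop_zero
    have h2 : Tendsto (fun t => Real.sqrt (η t ^ 2)) atTop (𝓝 (Real.sqrt 0)) :=
      (Real.continuous_sqrt.tendsto 0).comp h1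
    have h3 : Tendsto η atTop (𝓝 0) := by
      rw [Real.sqrt_zero] at h2
      refine h2.congr fun t => ?_
      rw [Real.sqrt_sq (hη t).le]
    obtain ⟨C, hC⟩ := h3.bddAbove_range
    exact ⟨C, fun t => hC (Set.mem_range_self t)⟩
  have hC0 : 0 ≤ C := (hη 0).le.trans (hC 0)
  -- tsum bound for η²
  set S2 : ℝ := ∑' t, η t ^ 2 with hS2def
  have hS2nn : 0 ≤ S2 := tsum_nonneg fun t => sq_nonneg _
  have hS2 : ∀ s : Finset ℕ, ∑ t ∈ s, η t ^ 2 ≤ S2 :=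
    fun s => hsq.sum_le_tsum s (fun _ _ => sq_nonneg _)
  -- double sum bound
  have hdouble : ∀ N, ∑ t ∈ Finset.Ico 1 N, (η t * M (t-1))
      ≤ C * ((1/(1-μ)) * ((1/(1-μ)) * (S2 * G^2))) := by
    intro N
    have hstep1 : ∑ t ∈ Finset.Ico 1 N, (η t * M (t-1))
        ≤ ∑ t ∈ Finset.Ico 1 N, C * ((1/(1-μ)) * ∑ k ∈ Icc 1 (t-1), μ^(t-1-k) * η k^2 * G^2) := by
      refine Finset.sum_le_sum fun t _ => ?_
      exact mul_le_mul (hC t) (hMbound (t-1)) (hMnn (t-1)) hC0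
    refine hstep1.trans ?_
    rw [← Finset.mul_sum, ← Finset.mul_sum]
    refine mul_le_mul_of_nonneg_left ?_ hC0
    refine mul_le_mul_of_nonneg_left ?_ (by positivity)
    -- ∑_{t ∈ Ico 1 N} ∑_{k ∈ Icc 1 (t-1)} μ^(t-1-k) η k² G² ≤ (1/(1-μ)) * (S2 * G²)
    have hre : ∀ t ∈ Finset.Ico 1 N, ∑ k ∈ Icc 1 (t-1), μ^(t-1-k) * η k^2 * G^2
        = ∑ k ∈ Finset.Ico 1 t, μ^(t-1-k) * η k^2 * G^2 := by
      intro t ht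
      have ht1 := (Finset.mem_Ico.mp ht).1
      have hset : Icc 1 (t-1) = Finset.Ico 1 t := by
        rw [← Finset.Ico_add_one_right_eq_Icc]
        congr 1
        omega
      rw [hset]
    rw [Finset.sum_congr rfl hre, ← Finset.sum_Ico_Ico_comm']
    have hinner : ∀ k ∈ Finset.Ico 1 N, ∑ t ∈ Finset.Ico (k+1) N, μ^(t-1-k) * η k^2 * G^2
        ≤ (1/(1-μ)) * (η k^2 * G^2) := by
      intro k _
      have h1 : ∑ t ∈ Finset.Ico (k+1) N, μ^(t-1-k) * η k^2 * G^2
          = (∑ t ∈ Finset.Ico (k+1) N, μ^(t-1-k)) * (η k^2 * G^2) := by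
        rw [Finset.sum_mul]
        refine Finset.sum_congr rfl fun t _ => ?_
        ring
      rw [h1]
      refine mul_le_mul_of_nonneg_right ?_ (by positivity)
      rw [Finset.sum_Ico_eq_sum_range]
      have h2 : ∀ i, μ^(k + 1 + i - 1 - k) = μ^i := fun i => by
        congr 1
        omega
      rw [Finset.sum_congr rfl fun i _ => h2 i]
      exact hgeom _
    refine (Finset.sum_le_sum hinner).trans ?_
    rw [← Finset.mul_sum]
    refine mul_le_mul_of_nonneg_left ?_ (by positivity)
    have h3 : ∑ k ∈ Finset.Ico 1 N, η k^2 * G^2 = (∑ k ∈ Finset.Ico 1 N, η k^2) * G^2 := by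
      rw [Finset.sum_mul]
    rw [h3]
    exact mul_le_mul_of_nonneg_right (hS2 _) hG2nn
  -- telescoping
  have htel : ∀ N, 1 ≤ N → ∑ t ∈ Finset.Ico 1 N, (F t - F (t+1)) = F 1 - F N := by
    intro N hN
    rw [Finset.sum_Ico_eq_sum_range]
    have h1 : ∀ i, F (1+i) - F (1+i+1) = (fun j => F (1+j)) i - (fun j => F (1+j)) (i+1) :=
      fun i => rfl
    rw [Finset.sum_congr rfl fun i _ => h1 i, Finset.sum_range_sub' (fun j => F (1+j))]
    congr 2 <;> omega
  have hF1 : F 1 = f x1 := by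
    have h1 : (fun ω => f (Z 1 ω)) = fun _ => f x1 := by
      funext ω
      rw [hZ1 ω]
    simp only [hFdef, h1, integral_const, measure_univ, ENNReal.toReal_one, smul_eq_mul, one_mul, probReal_univ]
  have hFlb : ∀ N, 1 ≤ N → fstar ≤ F N := by
    intro N hN
    have h := integral_mono (integrable_const fstar) (hfZint N hN) (fun ω => hbdd (Z N ω))
    simpa using h
  -- the master bound
  set B : ℝ := 2*(1-μ)*(f x1 - fstar) + (L/(1-μ)) * S2 * G^2
      + a^2*L^2 * (C * ((1/(1-μ)) * ((1/(1-μ)) * (S2 * G^2)))) with hBdef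
  have hsumB : ∀ N, ∑ t ∈ Finset.Ico 1 N, η t * I t ≤ B := by
    intro N
    have hB0 : 0 ≤ B := by
      have h1 : fstar ≤ f x1 := hbdd x1
      have h2 : (0:ℝ) ≤ 2*(1-μ)*(f x1 - fstar) := by nlinarith
      have h3 : (0:ℝ) ≤ (L/(1-μ)) * S2 * G^2 := by positivity
      have h4 : (0:ℝ) ≤ a^2*L^2 * (C * ((1/(1-μ)) * ((1/(1-μ)) * (S2 * G^2)))) := by positivity
      rw [hBdef]
      linarith
    rcases Nat.lt_or_ge N 2 with hN | hN
    · have : Finset.Ico 1 N = ∅ := by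
        apply Finset.Ico_eq_empty
        omega
      rw [this, Finset.sum_empty]
      exact hB0
    · have hN1 : 1 ≤ N := by omega
      have hstep : ∑ t ∈ Finset.Ico 1 N, η t * I t
          ≤ ∑ t ∈ Finset.Ico 1 N, (2*(1-μ)*(F t - F (t+1))
            + (L/(1-μ)) * η t^2 * G^2 + a^2*L^2 * (η t * M (t-1))) := by
        refine Finset.sum_le_sum fun t ht => ?_
        exact key t (Finset.mem_Ico.mp ht).1
      refine hstep.trans ?_
      rw [Finset.sum_add_distrib, Finset.sum_add_distrib]
      have hA : ∑ t ∈ Finset.Ico 1 N, 2*(1-μ)*(F t - F (t+1)) ≤ 2*(1-μ)*(f x1 - fstar) := by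
        rw [← Finset.mul_sum, htel N hN1, hF1]
        have := hFlb N hN1
        nlinarith
      have hBt : ∑ t ∈ Finset.Ico 1 N, (L/(1-μ)) * η t^2 * G^2 ≤ (L/(1-μ)) * S2 * G^2 := by
        have h1 : ∑ t ∈ Finset.Ico 1 N, (L/(1-μ)) * η t^2 * G^2
            = (L/(1-μ)) * (∑ t ∈ Finset.Ico 1 N, η t^2) * G^2 := by
          rw [Finset.mul_sum, Finset.sum_mul]
        rw [h1]
        have h2 : (0:ℝ) ≤ L/(1-μ) := by positivity
        refine mul_le_mul_of_nonneg_right ?_ hG2nn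
        exact mul_le_mul_of_nonneg_left (hS2 _) h2
      have hCt : ∑ t ∈ Finset.Ico 1 N, a^2*L^2 * (η t * M (t-1))
          ≤ a^2*L^2 * (C * ((1/(1-μ)) * ((1/(1-μ)) * (S2 * G^2)))) := by
        rw [← Finset.mul_sum]
        exact mul_le_mul_of_nonneg_left (hdouble N) (by positivity)
      rw [hBdef]
      linarith
  -- conclusion 1
  have con1 : Summable (fun t => η t * I t) :=
    summable_of_Ico_bound (fun t => mul_nonneg (hη t).le (hInn t)) hsumB
  -- conclusion 2
  have con2 : Summable (fun t => η t * (∫ ω, ‖f' (x t ω)‖ ∂P) ^ 2) := by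
    refine summable_of_Ico_bound (b := fun t => η t * (∫ ω, ‖f' (x t ω)‖ ∂P) ^ 2)
      (fun t => mul_nonneg (hη t).le (sq_nonneg _)) (B := B) ?_
    intro N
    refine le_trans (Finset.sum_le_sum fun t ht => ?_) (hsumB N)
    have ht1 := (Finset.mem_Ico.mp ht).1
    have hX2 : MemLp (fun ω => ‖f' (x t ω)‖) 2 P := (hf'comp _ (hxL2 t ht1)).norm
    have hvar := ProbabilityTheory.variance_nonneg (fun ω => ‖f' (x t ω)‖) P
    have hvdef := ProbabilityTheory.variance_eq_sub hX2
    have hsq' : (∫ ω, ‖f' (x t ω)‖ ∂P) ^ 2 ≤ I t := by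
      have h1 : (fun ω => ‖f' (x t ω)‖) ^ 2 = fun ω => ‖f' (x t ω)‖ ^ 2 := by
        funext ω
        simp [pow_two]
      rw [hvdef, h1] at hvar
      simp only [hIdef]
      linarith
    exact mul_le_mul_of_nonneg_left hsq' (hη t).le
  exact ⟨con1, con2⟩
end
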